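/- arXiv:1507.06752 — 13 statements merged into one kernel-verified Lean document; each statement's English description precedes it below -/
import Mathlib

section
/- Gordan's Lemma (saturation is finite): Let G be a finitely generated abelian group and Q a finitely generated submonoid of G. Let P = {g ∈ G : n • g ∈ Q for some integer n > 0} be the saturation of Q in G. Then P is a finitely generated Q-module: there exists a finite subset S ⊆ P such that every p ∈ P can be written as p = q + s with q ∈ Q and s ∈ S. -/
/-!
Write `Q` as the image of a hom `π : ℕⁿ →+ G`. If `m • p = π c` with `m > 0`, dividing `c` by `m`
with remainder gives `p = π (c / m) + d` with `m • d = π (c % m)`, so `d` is a combination of the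
generators with coefficients in `[0, 1)`. Modulo the finite torsion such `d` lie in a bounded
region of a lattice `ℤᵏ`, hence form a finite set `D`. Finally, for each `d ∈ D`, Dickson's lemma
on `ℕⁿ` shows that the `q ∈ Q` with `q + d ∈ P` all lie in `B + Q` for a finite subset `B` of them.
-/

open Set

theorem WellQuasiOrderedLE.exists_finset_forall_exists_le {α : Type*} [PartialOrder α]
    [WellQuasiOrderedLE α] (s : Set α) : ∃ B : Finset α, ↑B ⊆ s ∧ ∀ a ∈ s, ∃ b ∈ B, b ≤ a := by
  have hfin := WellQuasiOrderedLE.finite_of_isAntichain (setOfPred_minimal_antichain (· ∈ s))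
  refine ⟨hfin.toFinset, fun b hb => (hfin.mem_toFinset.1 hb).prop, fun a ha => ?_⟩
  obtain ⟨b, hba, hb⟩ := (isPWO_of_wellQuasiOrderedLE s).exists_le_minimal ha
  exact ⟨b, hfin.mem_toFinset.2 hb, hba⟩

namespace AddSubmonoid.FG

variable {M : Type*} [AddCommMonoid M] {Q : AddSubmonoid M}

theorem exists_finset_forall_exists_add_eq (hQ : Q.FG) {T : Set M} (hTQ : T ⊆ Q) :
    ∃ B : Finset M, ↑B ⊆ T ∧ ∀ t ∈ T, ∃ q ∈ Q, ∃ b ∈ B, t = q + b := by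
  classical
  obtain ⟨n, π, rfl⟩ := AddSubmonoid.fg_iff_exists_fin_addMonoidHom.1 hQ
  obtain ⟨B, hBT, hB⟩ := WellQuasiOrderedLE.exists_finset_forall_exists_le (π ⁻¹' T)
  refine ⟨B.image π, by simpa using hBT, fun t ht => ?_⟩
  obtain ⟨c, rfl⟩ := hTQ ht
  obtain ⟨b, hb, hbc⟩ := hB c ht
  exact ⟨π (c - b), AddMonoidHom.mem_mrange.2 ⟨_, rfl⟩, π b, Finset.mem_image_of_mem π hb,
    by rw [← map_add, tsub_add_cancel_of_le hbc]⟩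

theorem exists_finset_of_forall_exists_add_eq (hQ : Q.FG) {P : Set M}
    {D : Finset M} (hPD : ∀ p ∈ P, ∃ q ∈ Q, ∃ d ∈ D, p = q + d) :
    ∃ S : Finset M, ↑S ⊆ P ∧ ∀ p ∈ P, ∃ q ∈ Q, ∃ s ∈ S, p = q + s := by
  classical
  choose B hBP hB using fun d : M =>
    hQ.exists_finset_forall_exists_add_eq (T := {q | q ∈ Q ∧ q + d ∈ P}) fun _ hq => hq.1
  refine ⟨D.biUnion fun d => (B d).image (· + d), ?_, fun p hp => ?_⟩
  · simp only [Finset.coe_biUnion, Finset.coe_image, iUnion_subset_iff, image_subset_iff]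
    exact fun d _ b hb => (hBP d hb).2
  · obtain ⟨q, hq, d, hd, rfl⟩ := hPD p hp
    obtain ⟨q', hq', b, hb, rfl⟩ := hB d q ⟨hq, hp⟩
    exact ⟨q', hq', b + d, Finset.mem_biUnion.2 ⟨d, hd, Finset.mem_image_of_mem _ hb⟩,
      add_assoc _ _ _⟩

end AddSubmonoid.FG

theorem AddMonoidHom.finite_preimage_of_finite_ker {G H : Type*} [AddGroup G] [AddGroup H]
    (φ : G →+ H) (hφ : (φ.ker : Set G).Finite) {s : Set H} (hs : s.Finite) :
    (φ ⁻¹' s).Finite := by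
  refine hs.preimage' fun h _ => ?_
  rcases (φ ⁻¹' {h}).eq_empty_or_nonempty with he | ⟨g₀, hg₀⟩
  · simp [he]
  · refine (hφ.image (g₀ + ·)).subset fun g hg => ⟨-g₀ + g, ?_, add_neg_cancel_left g₀ g⟩
    simp_all [AddMonoidHom.mem_ker]

theorem AddGroup.FG.exists_addMonoidHom_finite_ker (G : Type*) [AddCommGroup G] [AddGroup.FG G] :
    ∃ (k : ℕ) (φ : G →+ (Fin k → ℤ)), (φ.ker : Set G).Finite := by
  classical
  obtain ⟨k, ι, _, p, hp, e, ⟨f⟩⟩ := AddCommGroup.equiv_free_prod_directSum_zmod G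
  have : ∀ i, NeZero (p i ^ e i) := fun i => ⟨pow_ne_zero _ (hp i).ne_zero⟩
  have : Finite (DirectSum ι fun i => ZMod (p i ^ e i)) :=
    Finite.of_equiv _ DFinsupp.equivFunOnFintype.symm
  let φ := (Finsupp.coeFnAddHom.comp (AddMonoidHom.fst _ _)).comp f.toAddMonoidHom
  refine ⟨k, φ, Set.Finite.of_finite_image (f := fun g => (f g).2) (Set.toFinite _) ?_⟩
  intro g hg g' hg' h
  have hg : ((f g).1 : Fin k → ℤ) = 0 := hg
  have hg' : ((f g').1 : Fin k → ℤ) = 0 := hg'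
  exact f.injective (Prod.ext (DFunLike.coe_injective (hg.trans hg'.symm)) h)

theorem abs_le_sum_abs_of_nsmul_eq_sum_nsmul {H ι : Type*} [AddCommGroup H] [LinearOrder H]
    [IsOrderedAddMonoid H] {s : Finset ι} {m : ℕ} (hm : 0 < m) {r : ι → ℕ} (hr : ∀ i ∈ s, r i ≤ m)
    {x : H} {w : ι → H} (hx : m • x = ∑ i ∈ s, r i • w i) : |x| ≤ ∑ i ∈ s, |w i| := by
  refine le_of_nsmul_le_nsmul_right hm.ne' ?_
  calc m • |x| = |∑ i ∈ s, r i • w i| := by rw [← hx, abs_nsmul]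
    _ ≤ ∑ i ∈ s, |r i • w i| := Finset.abs_sum_le_sum_abs _ _
    _ = ∑ i ∈ s, r i • |w i| := by simp only [abs_nsmul]
    _ ≤ ∑ i ∈ s, m • |w i| :=
      Finset.sum_le_sum fun i hi => nsmul_le_nsmul_left (abs_nonneg _) (hr i hi)
    _ = m • ∑ i ∈ s, |w i| := Finset.smul_sum.symm

theorem AddMonoidHom.apply_eq_sum_nsmul_single {ι M : Type*} [Fintype ι] [DecidableEq ι]
    [AddCommMonoid M] (π : (ι → ℕ) →+ M) (r : ι → ℕ) :
    π r = ∑ i, r i • π (Pi.single i 1) := by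
  conv_lhs => rw [← Finset.univ_sum_single r]
  simp only [map_sum, ← map_nsmul, ← Pi.single_smul, smul_eq_mul, mul_one]

section FractionalParts

variable {ι G : Type*} [AddCommGroup G]

/-- The elements `∑ i, (r i / m) • π (Pi.single i 1)` with all coefficients in `[0, 1)`. -/
def fractionalParts (π : (ι → ℕ) →+ G) : Set G :=
  {d | ∃ m : ℕ, 0 < m ∧ ∃ r : ι → ℕ, (∀ i, r i < m) ∧ m • d = π r}

theorem finite_fractionalParts [Fintype ι] [AddGroup.FG G] (π : (ι → ℕ) →+ G) :
    (fractionalParts π).Finite := by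
  classical
  obtain ⟨k, φ, hφ⟩ := AddGroup.FG.exists_addMonoidHom_finite_ker G
  let w : ι → Fin k → ℤ := fun i => φ (π (Pi.single i 1))
  let M : Fin k → ℤ := fun j => ∑ i, |w i j|
  have hbox : (univ.pi fun j => Icc (-M j) (M j)).Finite := Set.Finite.pi fun j => finite_Icc _ _
  refine (φ.finite_preimage_of_finite_ker hφ hbox).subset ?_
  rintro d ⟨m, hm, r, hrm, hd⟩ j -
  have hdj : m • φ d j = ∑ i, r i • w i j := by
    have := ((Pi.evalAddMonoidHom (fun _ => ℤ) j).comp (φ.comp π)).apply_eq_sum_nsmul_single r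
    simpa only [← hd, AddMonoidHom.comp_apply, map_nsmul, Pi.evalAddMonoidHom_apply] using this
  exact abs_le.1 (abs_le_sum_abs_of_nsmul_eq_sum_nsmul hm (fun i _ => (hrm i).le) hdj)

theorem exists_add_mem_fractionalParts_of_nsmul_mem_mrange {π : (ι → ℕ) →+ G} {m : ℕ}
    (hm : 0 < m) {p : G} (hp : m • p ∈ AddMonoidHom.mrange π) :
    ∃ q ∈ AddMonoidHom.mrange π, ∃ d ∈ fractionalParts π, p = q + d := by
  obtain ⟨c, hc⟩ := hp
  have hdiv : c = m • (fun i => c i / m) + fun i => c i % m :=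
    funext fun i => (Nat.div_add_mod' (c i) m).symm.trans (by simp [mul_comm])
  refine ⟨π fun i => c i / m, ⟨_, rfl⟩, p - π fun i => c i / m,
    ⟨m, hm, fun i => c i % m, fun i => Nat.mod_lt _ hm, ?_⟩,
    (add_sub_cancel _ _).symm⟩
  rw [smul_sub, ← hc]
  nth_rw 1 [hdiv]
  rw [map_add, map_nsmul, add_sub_cancel_left]

end FractionalParts

/-- **Gordan's Lemma (saturation is finite).** Let `G` be a finitely generated abelian
group and `Q` a finitely generated submonoid of `G`.  Let
`P = {g ∈ G : n • g ∈ Q for some n > 0}` be the saturation of `Q` in `G`.  Then `P` is a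
finitely generated `Q`-module: there is a finite subset `S ⊆ P` such that every `p ∈ P`
can be written as `p = q + s` with `q ∈ Q` and `s ∈ S`. -/
theorem gordan_saturation_finitely_generated
    (G : Type*) [AddCommGroup G] (hG : AddGroup.FG G)
    (Q : AddSubmonoid G) (hQ : Q.FG)
    (P : Set G) (hP : P = {g : G | ∃ n : ℕ, 0 < n ∧ n • g ∈ Q}) :
    ∃ S : Finset G, ↑S ⊆ P ∧ ∀ p ∈ P, ∃ q ∈ Q, ∃ s ∈ S, p = q + s := by
  obtain ⟨n, π, rfl⟩ := AddSubmonoid.fg_iff_exists_fin_addMonoidHom.1 hQ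
  have hD := finite_fractionalParts π
  refine hQ.exists_finset_of_forall_exists_add_eq (D := hD.toFinset) ?_
  intro p hp
  obtain ⟨m, hm, hmp⟩ := hP ▸ hp
  obtain ⟨q, hq, d, hd, rfl⟩ := exists_add_mem_fractionalParts_of_nsmul_mem_mrange hm hmp
  exact ⟨q, hq, d, hD.mem_toFinset.2 hd, rfl⟩
end

section
/- Let h : Q → P be a homomorphism of commutative monoids with P finitely generated. If h is dense (for every p ∈ P there exists an integer n > 0 with n • p in the image of h), then P is a finitely generated Q-module via h: there is a finite subset S ⊆ P such that every p ∈ P can be written as p = h(q) + s with q ∈ Q and s ∈ S. -/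
/-! Write `P` as generated by finitely many `g`, with `n_g • g = h q_g` for some `n_g > 0`.
Division with remainder turns `m • g` into `h ((m / n_g) • q_g) + (m % n_g) • g`, so the finitely
many sums `∑ k_g • g` with `k_g < n_g` serve as `S`. -/

section

open Pointwise

variable {Q P : Type*} [AddCommMonoid Q] [AddCommMonoid P]

def IsFGModuleOn (h : Q →+ P) (M : AddSubmonoid P) : Prop :=
  ∃ S : Finset P, ∀ p ∈ M, ∃ q : Q, ∃ s ∈ S, p = h q + s

namespace IsFGModuleOn

variable {h : Q →+ P}

theorem bot : IsFGModuleOn h ⊥ :=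
  ⟨{0}, fun p hp => ⟨0, 0, Finset.mem_singleton_self 0, by simp [AddSubmonoid.mem_bot.mp hp]⟩⟩

theorem sup {M N : AddSubmonoid P} (hM : IsFGModuleOn h M) (hN : IsFGModuleOn h N) :
    IsFGModuleOn h (M ⊔ N) := by
  classical
  obtain ⟨S, hS⟩ := hM
  obtain ⟨T, hT⟩ := hN
  refine ⟨S + T, fun p hp => ?_⟩
  obtain ⟨y, hy, z, hz, rfl⟩ := AddSubmonoid.mem_sup.mp hp
  obtain ⟨q, s, hs, rfl⟩ := hS y hy
  obtain ⟨q', t, ht, rfl⟩ := hT z hz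
  refine ⟨q + q', s + t, Finset.add_mem_add hs ht, ?_⟩
  rw [map_add]
  abel

theorem closure_singleton {g : P} {n : ℕ} (hn : 0 < n) {q₀ : Q} (hq₀ : h q₀ = n • g) :
    IsFGModuleOn h (AddSubmonoid.closure {g}) := by
  classical
  refine ⟨(Finset.range n).image (· • g), fun p hp => ?_⟩
  obtain ⟨m, rfl⟩ := AddSubmonoid.mem_closure_singleton.mp hp
  refine ⟨(m / n) • q₀, (m % n) • g,
    Finset.mem_image_of_mem _ (Finset.mem_range.mpr (Nat.mod_lt m hn)), ?_⟩
  rw [map_nsmul, hq₀, ← mul_nsmul', ← add_nsmul, Nat.div_add_mod']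

theorem closure_finset (hdense : ∀ p : P, ∃ n : ℕ, 0 < n ∧ n • p ∈ Set.range h)
    (T : Finset P) : IsFGModuleOn h (AddSubmonoid.closure T) := by
  classical
  induction T using Finset.induction_on with
  | empty => simpa using bot
  | insert g T _ ih =>
    obtain ⟨n, hn, q₀, hq₀⟩ := hdense g
    rw [Finset.coe_insert, Set.insert_eq, AddSubmonoid.closure_union]
    exact (closure_singleton hn hq₀).sup ih

end IsFGModuleOn

end

/-- If `h : Q → P` is a homomorphism of commutative monoids with `P` finitely generated
and `h` is dense (every `p ∈ P` has `n • p ∈ range h` for some `n > 0`), then `P` is a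
finitely generated `Q`-module via `h`. -/
theorem finitely_generated_module_of_dense
    (Q P : Type*) [AddCommMonoid Q] [AddCommMonoid P]
    (hP : AddMonoid.FG P) (h : Q →+ P)
    (hdense : ∀ p : P, ∃ n : ℕ, 0 < n ∧ n • p ∈ Set.range h) :
    ∃ S : Finset P, ∀ p : P, ∃ q : Q, ∃ s ∈ S, p = h q + s := by
  obtain ⟨T, hT⟩ := hP.fg_top
  obtain ⟨S, hS⟩ := IsFGModuleOn.closure_finset hdense T
  exact ⟨S, fun p => hS p (hT ▸ AddSubmonoid.mem_top p)⟩
end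

section
/- Let h : Q → P be a homomorphism of commutative monoids with Q finitely generated and P cancellative. If P is a finitely generated Q-module via h, then P is finitely generated as a monoid (hence fine) and h is dense: for every p ∈ P there exists an integer n > 0 with n • p in the image of h. -/
/-!
Since `P = h(Q) + S` with `S` finite, `P` is generated by the images of generators of `Q` together
with `S`. For density, write `n • p = h qₙ + sₙ` for every `n`. On a finitely generated commutative
monoid the relation `a ≼ b ↔ ∃ c, b = a + c` is a well-quasi-order (it is the image of the product
order on `ℕᵏ`, Dickson's lemma), and so is equality on the finite set `S`. Hence there are `i < j`
with `sᵢ = sⱼ` and `qⱼ = qᵢ + c`, so `(j - i) • p + i • p = j • p = h c + i • p`, and cancelling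
`i • p` gives `(j - i) • p = h c`.
-/

theorem AddMonoid.FG.wellQuasiOrdered_exists_eq_add {Q : Type*} [AddCommMonoid Q]
    [AddMonoid.FG Q] : WellQuasiOrdered fun a b : Q => ∃ c, b = a + c := by
  obtain ⟨n, f, hf⟩ :=
    AddSubmonoid.fg_iff_exists_fin_addMonoidHom.mp (AddMonoid.FG.fg_top (M := Q))
  refine wellQuasiOrdered_le.of_surjective
    { toFun := f, map_rel' := fun {a b} hab => ⟨f (b - a), ?_⟩ }
    ((AddMonoidHom.mrange_eq_top (f := f)).mp hf)
  rw [← f.map_add, add_tsub_cancel_of_le hab]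

namespace AddMonoidHom

variable {Q P : Type*}

def FiniteModule [AddMonoid Q] [AddMonoid P] (h : Q →+ P) : Prop :=
  ∃ S : Finset P, ∀ p : P, ∃ q : Q, ∃ s ∈ S, p = h q + s

def IsDense [AddMonoid Q] [AddMonoid P] (h : Q →+ P) : Prop :=
  ∀ p : P, ∃ n : ℕ, 0 < n ∧ n • p ∈ Set.range h

theorem FiniteModule.fg [AddMonoid Q] [AddMonoid P] [AddMonoid.FG Q] {h : Q →+ P}
    (hh : h.FiniteModule) : AddMonoid.FG P := by
  obtain ⟨S, hS⟩ := hh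
  have hfg : (mrange h ⊔ AddSubmonoid.closure (S : Set P)).FG :=
    ((AddMonoid.fg_iff_addSubmonoid_fg _).mp (AddMonoid.fg_range h)).sup ⟨S, rfl⟩
  have htop : mrange h ⊔ AddSubmonoid.closure (S : Set P) = ⊤ := by
    refine top_le_iff.mp fun p _ => ?_
    obtain ⟨q, s, hs, rfl⟩ := hS p
    exact add_mem (AddSubmonoid.mem_sup_left ⟨q, rfl⟩)
      (AddSubmonoid.mem_sup_right (AddSubmonoid.subset_closure hs))
  exact ⟨htop ▸ hfg⟩

theorem FiniteModule.isDense [AddCommMonoid Q] [AddCommMonoid P] [IsCancelAdd P]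
    [AddMonoid.FG Q] {h : Q →+ P} (hh : h.FiniteModule) : h.IsDense := by
  obtain ⟨S, hS⟩ := hh
  intro p
  choose q s hsS hq using fun n : ℕ => hS (n • p)
  have hwqo : WellQuasiOrdered fun x y : S × Q => x.1 = y.1 ∧ ∃ c, y.2 = x.2 + c :=
    (Finite.wellQuasiOrdered _).prod AddMonoid.FG.wellQuasiOrdered_exists_eq_add
  obtain ⟨i, j, hij, hs, c, hc : q j = q i + c⟩ := hwqo fun n => (⟨s n, hsS n⟩, q n)
  refine ⟨j - i, Nat.sub_pos_of_lt hij, c, add_right_cancel (b := i • p) ?_⟩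
  calc h c + i • p = h (q j) + s j := by
        rw [hq i, hc, map_add, show s i = s j from congrArg Subtype.val hs]
        abel
    _ = (j - i) • p + i • p := by rw [← hq j, ← add_nsmul, Nat.sub_add_cancel hij.le]

end AddMonoidHom

/-- If `h : Q → P` is a homomorphism of commutative monoids with `Q` finitely generated
and `P` cancellative (integral), and `P` is a finitely generated `Q`-module via `h`,
then `P` is a finitely generated monoid (hence fine) and `h` is dense. -/
theorem fg_and_dense_of_finite_module
    (Q P : Type*) [AddCommMonoid Q] [AddCommMonoid P] [IsCancelAdd P]
    (hQ : AddMonoid.FG Q) (h : Q →+ P)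
    (S : Finset P) (hS : ∀ p : P, ∃ q : Q, ∃ s ∈ S, p = h q + s) :
    AddMonoid.FG P ∧ ∀ p : P, ∃ n : ℕ, 0 < n ∧ n • p ∈ Set.range h := by
  have hh : h.FiniteModule := ⟨S, hS⟩
  exact ⟨hh.fg, hh.isDense⟩
end

section
/- Let G be an abelian group and P ⊆ G a finitely generated submonoid that generates G as a group. Let U = P ∩ (−P) be the subgroup of units of P. If U is torsion-free and the quotient group G ⧸ U is torsion-free, then the monoid algebra ℂ[P] = AddMonoidAlgebra ℂ P is an integral domain. -/
/-- Old Mathlib definition (removed since): an additive monoid is torsion-free if no nonzero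
element has finite additive order. -/
def AddMonoid.IsTorsionFree (G : Type*) [AddMonoid G] : Prop :=
  ∀ g : G, g ≠ 0 → ¬IsOfFinAddOrder g

/-! Torsion-freeness passes from `U` and `G ⧸ U` to `G`. A torsion-free abelian group embeds in
its divisible hull, a `ℚ`-vector space, and so has unique sums; hence so does its submonoid `P`,
and a monoid algebra over a domain with unique sums in the exponents has no zero divisors. -/

theorem AddMonoid.isTorsionFree_iff_isAddTorsionFree {G : Type*} [AddCommGroup G] :
    AddMonoid.IsTorsionFree G ↔ IsAddTorsionFree G :=
  isAddTorsionFree_iff_not_isOfFinAddOrder.symm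

theorem IsAddTorsionFree.of_addSubgroup_of_quotient {G : Type*} [AddCommGroup G]
    (U : AddSubgroup G) [IsAddTorsionFree U] [IsAddTorsionFree (G ⧸ U)] : IsAddTorsionFree G := by
  refine .of_not_isOfFinAddOrder fun g hg hfin => ?_
  have hgU : g ∈ U := (QuotientAddGroup.eq_zero_iff g).mp <|
    ((QuotientAddGroup.mk' U).isOfFinAddOrder hfin).eq_zero'
  have : (⟨g, hgU⟩ : U) = 0 :=
    (AddSubmonoid.isOfFinAddOrder_coe (H := U.toAddSubmonoid) (x := ⟨g, hgU⟩)
      |>.mp hfin).eq_zero'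
  exact hg congr(Subtype.val $this)

theorem IsAddTorsionFree.twoUniqueSums (G : Type*) [AddCommGroup G] [IsAddTorsionFree G] :
    TwoUniqueSums G :=
  .of_injective_addHom (DivisibleHull.coeAddMonoidHom (M := G)).toAddHom
    DivisibleHull.coe_injective inferInstance

theorem monoid_algebra_is_domain_general
    (G : Type*) [AddCommGroup G] (P : AddSubmonoid G) (U : AddSubgroup G)
    (hUtf : AddMonoid.IsTorsionFree U)
    (hGUtf : AddMonoid.IsTorsionFree (G ⧸ U)) :
    IsDomain (AddMonoidAlgebra ℂ ↥P) := by
  rw [AddMonoid.isTorsionFree_iff_isAddTorsionFree] at hUtf hGUtf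
  have : IsAddTorsionFree G := .of_addSubgroup_of_quotient U
  have : TwoUniqueSums G := IsAddTorsionFree.twoUniqueSums G
  have : UniqueSums P :=
    .of_injective_addHom P.subtype.toAddHom Subtype.coe_injective inferInstance
  infer_instance

/-- Let `G` be an abelian group and `P ⊆ G` a finitely generated submonoid generating `G`
as a group (so `G = P^gp` and `P` is fine).  Let `U = P ∩ (−P)` be the group of units of
`P`.  If `U` and `G ⧸ U` are torsion-free, then the monoid algebra `ℂ[P]` is an integral
domain. -/
theorem monoid_algebra_is_domain
    (G : Type*) [AddCommGroup G] (P : AddSubmonoid G) (hPfg : P.FG)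
    (hgen : AddSubgroup.closure (P : Set G) = ⊤)
    (U : AddSubgroup G) (hU : ∀ g : G, g ∈ U ↔ g ∈ P ∧ -g ∈ P)
    (hUtf : AddMonoid.IsTorsionFree U)
    (hGUtf : AddMonoid.IsTorsionFree (G ⧸ U)) :
    IsDomain (AddMonoidAlgebra ℂ ↥P) :=
  monoid_algebra_is_domain_general G P U hUtf hGUtf
end

section
/- Orbits and faces (algebraically closed case): Let k be an algebraically closed field and P a cancellative commutative monoid. Let x, y : P → k be two monoid homomorphisms into the multiplicative monoid of k. Then {p ∈ P : x(p) ≠ 0} = {p ∈ P : y(p) ≠ 0} if and only if there exists a monoid homomorphism g : P → kˣ such that y(p) = g(p) · x(p) for all p ∈ P. -/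
/-!
On the common face `F`, the quotient `y / x` is a homomorphism `F → kˣ`, and any `g` with
`y = g · x` must extend it; off the face both `x` and `y` vanish. Such an extension exists
because `kˣ` is divisible, hence an injective `ℤ`-module, and because cancellativity of `P` makes
the Grothendieck group of `F` a subgroup of that of `P`.
-/

open Algebra Function

section Extension

variable {G : Type*} [CommGroup G]

theorem MonoidHom.exists_comp_eq_of_injective [DivisibleBy (Additive G) ℤ] {A B : Type*}
    [CommGroup A] [CommGroup B] (i : A →* B) (hi : Injective i) (f : A →* G) :
    ∃ g : B →* G, g.comp i = f := by
  obtain ⟨g, hg⟩ := Module.Baer.extension_property_addMonoidHom (Module.Baer.of_divisible _)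
    (MonoidHom.toAdditive i) hi (MonoidHom.toAdditive f)
  exact ⟨MonoidHom.toAdditive.symm g, MonoidHom.toAdditive.injective hg⟩

variable {M : Type*} [CommMonoid M]

theorem Algebra.GrothendieckGroup.lift_of (f : M →* G) (m : M) :
    GrothendieckGroup.lift f (GrothendieckGroup.of m) = f m :=
  DFunLike.congr_fun (GrothendieckGroup.lift.symm_apply_apply f) m

theorem Algebra.GrothendieckGroup.exists_eq_of_div_of (z : GrothendieckGroup M) :
    ∃ a b : M, z = GrothendieckGroup.of a / GrothendieckGroup.of b := by
  induction z using Localization.ind with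
  | _ p => exact ⟨p.1, p.2, by simp [← Localization.mk_one_eq_monoidOf_mk]⟩

variable [IsCancelMul M] (S : Submonoid M)

theorem Algebra.GrothendieckGroup.lift_of_comp_subtype_injective :
    Injective (GrothendieckGroup.lift (GrothendieckGroup.of.comp S.subtype)) := by
  refine (injective_iff_map_eq_one _).mpr fun z hz => ?_
  obtain ⟨a, b, rfl⟩ := GrothendieckGroup.exists_eq_of_div_of z
  rw [map_div, GrothendieckGroup.lift_of, GrothendieckGroup.lift_of, div_eq_one] at hz
  rw [Subtype.ext (GrothendieckGroup.of_injective hz), div_self']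

theorem Submonoid.exists_monoidHom_extension [DivisibleBy (Additive G) ℤ] (f : S →* G) :
    ∃ g : M →* G, ∀ s : S, g s = f s := by
  obtain ⟨g, hg⟩ := MonoidHom.exists_comp_eq_of_injective _
    (GrothendieckGroup.lift_of_comp_subtype_injective S) (GrothendieckGroup.lift f)
  refine ⟨g.comp GrothendieckGroup.of, fun s => ?_⟩
  have hs := DFunLike.congr_fun hg (GrothendieckGroup.of s)
  rwa [MonoidHom.comp_apply, GrothendieckGroup.lift_of, GrothendieckGroup.lift_of] at hs

end Extension

section Face

variable {M G₀ : Type*} [CommMonoid M] [CommGroupWithZero G₀]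

def MonoidHom.face (x : M →* G₀) : Submonoid M := (IsUnit.submonoid G₀).comap x

theorem MonoidHom.mem_face {x : M →* G₀} {m : M} : m ∈ x.face ↔ x m ≠ 0 :=
  isUnit_iff_ne_zero

theorem MonoidHom.face_eq_of_twist {x y : M →* G₀} (g : M →* G₀ˣ) (h : ∀ m, y m = g m * x m) :
    x.face = y.face := by
  ext m
  simp only [MonoidHom.mem_face, h, ne_eq, Units.mul_right_eq_zero]

theorem MonoidHom.exists_twist_of_face_eq [IsCancelMul M] [DivisibleBy (Additive G₀ˣ) ℤ]
    {x y : M →* G₀} (hxy : x.face = y.face) : ∃ g : M →* G₀ˣ, ∀ m, y m = g m * x m := by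
  have hx : ∀ s, IsUnit (x.comp x.face.subtype s) := fun s => s.2
  have hy : ∀ s, IsUnit (y.comp x.face.subtype s) := fun s => (hxy ▸ s.2 : (s : M) ∈ y.face)
  obtain ⟨g, hg⟩ := x.face.exists_monoidHom_extension
    (IsUnit.liftRight (y.comp x.face.subtype) hy / IsUnit.liftRight (x.comp x.face.subtype) hx)
  refine ⟨g, fun m => ?_⟩
  by_cases hm : m ∈ x.face
  · rw [hg ⟨m, hm⟩, MonoidHom.div_apply, Units.val_div_eq_div_val, IsUnit.coe_liftRight,
      IsUnit.coe_liftRight, MonoidHom.comp_apply, MonoidHom.comp_apply, Submonoid.coe_subtype,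
      div_mul_cancel₀ _ (MonoidHom.mem_face.mp hm)]
  · have hy : m ∉ y.face := hxy ▸ hm
    rw [MonoidHom.mem_face, not_not] at hm hy
    rw [hm, hy, mul_zero]

theorem MonoidHom.face_eq_iff_exists_twist [IsCancelMul M] [DivisibleBy (Additive G₀ˣ) ℤ]
    (x y : M →* G₀) : x.face = y.face ↔ ∃ g : M →* G₀ˣ, ∀ m, y m = g m * x m :=
  ⟨exists_twist_of_face_eq, fun ⟨g, h⟩ => face_eq_of_twist g h⟩

end Face

theorem IsAlgClosed.exists_units_pow_eq {k : Type*} [Field k] [IsAlgClosed k] (u : kˣ) {n : ℕ}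
    (hn : n ≠ 0) : ∃ z : kˣ, z ^ n = u := by
  obtain ⟨z, hz⟩ := IsAlgClosed.exists_pow_nat_eq (u : k) (Nat.pos_of_ne_zero hn)
  have hz0 : z ≠ 0 := by rintro rfl; exact u.ne_zero (by rw [← hz, zero_pow hn])
  exact ⟨Units.mk0 z hz0, Units.ext (by simpa using hz)⟩

noncomputable instance IsAlgClosed.divisibleByNatAdditiveUnits (k : Type*) [Field k]
    [IsAlgClosed k] : DivisibleBy (Additive kˣ) ℕ :=
  divisibleByOfSMulRightSurj _ _ fun hn u => by
    obtain ⟨z, hz⟩ := IsAlgClosed.exists_units_pow_eq u.toMul hn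
    exact ⟨Additive.ofMul z, congrArg Additive.ofMul hz⟩

noncomputable instance IsAlgClosed.divisibleByIntAdditiveUnits (k : Type*) [Field k]
    [IsAlgClosed k] : DivisibleBy (Additive kˣ) ℤ :=
  AddGroup.divisibleByIntOfDivisibleByNat _

/-- **Orbits and faces (algebraically closed case).** Let `k` be an algebraically closed
field and `P` a cancellative commutative monoid.  Two monoid homomorphisms
`x, y : P → (k, ·)` have the same face `{p : x p ≠ 0} = {p : y p ≠ 0}` iff there is a
monoid homomorphism `g : P → kˣ` with `y p = g p · x p` for all `p`. -/
theorem same_face_iff_twist_algClosed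
    (k : Type*) [Field k] [IsAlgClosed k]
    (P : Type*) [AddCommMonoid P] [IsCancelAdd P]
    (x y : Multiplicative P →* k) :
    {p : P | x (Multiplicative.ofAdd p) ≠ 0} = {p : P | y (Multiplicative.ofAdd p) ≠ 0} ↔
      ∃ g : Multiplicative P →* kˣ, ∀ p : P,
        y (Multiplicative.ofAdd p) =
          (g (Multiplicative.ofAdd p) : k) * x (Multiplicative.ofAdd p) := by
  have hface : {p : P | x (Multiplicative.ofAdd p) ≠ 0} = {p | y (Multiplicative.ofAdd p) ≠ 0} ↔
      x.face = y.face := by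
    simp only [Set.ext_iff, SetLike.ext_iff, Set.mem_ofPred_eq, MonoidHom.mem_face]
    exact Multiplicative.ofAdd.forall_congr_right (q := fun m => x m ≠ 0 ↔ y m ≠ 0)
  rw [hface, MonoidHom.face_eq_iff_exists_twist]
  exact exists_congr fun g =>
    (Multiplicative.ofAdd.forall_congr_right (q := fun m => y m = g m * x m)).symm
end

section
/- Orbits and faces (fs case, arbitrary field): Let k be a field, G a finitely generated abelian group, and P ⊆ G a submonoid that generates G as a group and is saturated in G (for all g ∈ G and integers n > 0, n • g ∈ P implies g ∈ P); thus P is an fs monoid with P^gp = G. Let x, y : P → k be monoid homomorphisms into the multiplicative monoid of k. Then {p ∈ P : x(p) ≠ 0} = {p ∈ P : y(p) ≠ 0} if and only if there exists a group homomorphism g : G → kˣ such that y(p) = g(p) · x(p) for all p ∈ P. -/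
open Multiplicative

namespace SameFaceAux

open scoped Classical

variable {k : Type*} [Field k] {G : Type*} [AddCommGroup G] {P : AddSubmonoid G}

/-- Extend a monoid hom `x : P → k` by zero to all of `G`. -/
noncomputable def ext (x : Multiplicative P →* k) : G → k :=
  fun g => if h : g ∈ P then x (ofAdd (⟨g, h⟩ : P)) else 0

lemma ext_coe (x : Multiplicative P →* k) (p : P) : ext x (p : G) = x (ofAdd p) := by
  simp [ext, p.2]

lemma ext_zero (x : Multiplicative P →* k) : ext x (0 : G) = 1 := by
  have h := ext_coe x 0
  simpa using h

lemma mem_of_ext_ne_zero {x : Multiplicative P →* k} {g : G} (h : ext x g ≠ 0) : g ∈ P := by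
  by_contra hg
  simp [ext, hg] at h

lemma ext_add (x : Multiplicative P →* k) {a b : G} (ha : a ∈ P) (hb : b ∈ P) :
    ext x (a + b) = ext x a * ext x b := by
  simp only [ext, dif_pos (P.add_mem ha hb), dif_pos ha, dif_pos hb]
  have h : (⟨a + b, P.add_mem ha hb⟩ : P) = ⟨a, ha⟩ + ⟨b, hb⟩ := rfl
  rw [h, ofAdd_add, map_mul]

lemma ext_nsmul (x : Multiplicative P →* k) {a : G} (ha : a ∈ P) (n : ℕ) :
    ext x (n • a) = (ext x a) ^ n := by
  induction n with
  | zero => simp [ext_zero]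
  | succ n ih =>
    rw [succ_nsmul, ext_add x (AddSubmonoid.nsmul_mem _ ha n) ha, ih, pow_succ]

/-- Well-definedness of the ratio `y a * x b / (x a * y b)` on representations `a - b`. -/
lemma wd (x y : Multiplicative P →* k) (hxy : ∀ g, ext x g ≠ 0 → ext y g ≠ 0)
    {a b c d : G} (ha : ext x a ≠ 0) (hb : ext x b ≠ 0) (hc : ext x c ≠ 0) (hd : ext x d ≠ 0)
    (h : a - b = c - d) :
    ext y a * ext x b / (ext x a * ext y b) = ext y c * ext x d / (ext x c * ext y d) := by
  have habcd : a + d = c + b := sub_eq_sub_iff_add_eq_add.mp h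
  have hx : ext x a * ext x d = ext x c * ext x b := by
    rw [← ext_add x (mem_of_ext_ne_zero ha) (mem_of_ext_ne_zero hd),
      ← ext_add x (mem_of_ext_ne_zero hc) (mem_of_ext_ne_zero hb), habcd]
  have hy : ext y a * ext y d = ext y c * ext y b := by
    rw [← ext_add y (mem_of_ext_ne_zero ha) (mem_of_ext_ne_zero hd),
      ← ext_add y (mem_of_ext_ne_zero hc) (mem_of_ext_ne_zero hb), habcd]
  have hya := hxy a ha
  have hyb := hxy b hb
  have hyc := hxy c hc
  have hyd := hxy d hd
  field_simp
  linear_combination (ext x b * ext x c) * hy - (ext y c * ext y b) * hx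

/-- The twisting function: on `g = a - b` with `x a, x b ≠ 0`, the value
`y a * x b / (x a * y b)`; elsewhere `1`. -/
noncomputable def chi (x y : Multiplicative P →* k) : G → k :=
  fun g =>
    if h : ∃ ab : G × G, ext x ab.1 ≠ 0 ∧ ext x ab.2 ≠ 0 ∧ g = ab.1 - ab.2 then
      ext y h.choose.1 * ext x h.choose.2 / (ext x h.choose.1 * ext y h.choose.2)
    else 1

lemma chi_spec (x y : Multiplicative P →* k) (hxy : ∀ g, ext x g ≠ 0 → ext y g ≠ 0)
    {a b g : G} (ha : ext x a ≠ 0) (hb : ext x b ≠ 0) (hg : g = a - b) :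
    chi x y g = ext y a * ext x b / (ext x a * ext y b) := by
  have hex : ∃ ab : G × G, ext x ab.1 ≠ 0 ∧ ext x ab.2 ≠ 0 ∧ g = ab.1 - ab.2 :=
    ⟨(a, b), ha, hb, hg⟩
  rw [chi, dif_pos hex]
  exact wd x y hxy hex.choose_spec.1 hex.choose_spec.2.1 ha hb
    (hex.choose_spec.2.2 ▸ hg)

lemma chi_ne_zero (x y : Multiplicative P →* k) (hxy : ∀ g, ext x g ≠ 0 → ext y g ≠ 0)
    (g : G) : chi x y g ≠ 0 := by
  rw [chi]
  split_ifs with h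
  · have h1 := h.choose_spec.1
    have h2 := h.choose_spec.2.1
    exact div_ne_zero (mul_ne_zero (hxy _ h1) h2) (mul_ne_zero h1 (hxy _ h2))
  · exact one_ne_zero

/-- Every element of the subgroup generated by the face has a representation `a - b`. -/
lemma mem_closure_rep (x : Multiplicative P →* k) {g : G}
    (hg : g ∈ AddSubgroup.closure {g : G | ext x g ≠ 0}) :
    ∃ a b : G, ext x a ≠ 0 ∧ ext x b ≠ 0 ∧ g = a - b := by
  let S : AddSubgroup G :=
    { carrier := {g : G | ∃ a b : G, ext x a ≠ 0 ∧ ext x b ≠ 0 ∧ g = a - b}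
      zero_mem' := ⟨0, 0, by simp [ext_zero], by simp [ext_zero], by simp⟩
      add_mem' := by
        rintro u v ⟨a, b, ha, hb, rfl⟩ ⟨c, d, hc, hd, rfl⟩
        refine ⟨a + c, b + d, ?_, ?_, by abel⟩
        · rw [ext_add x (mem_of_ext_ne_zero ha) (mem_of_ext_ne_zero hc)]
          exact mul_ne_zero ha hc
        · rw [ext_add x (mem_of_ext_ne_zero hb) (mem_of_ext_ne_zero hd)]
          exact mul_ne_zero hb hd
      neg_mem' := by
        rintro u ⟨a, b, ha, hb, rfl⟩
        exact ⟨b, a, hb, ha, by abel⟩ }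
  have hle : AddSubgroup.closure {g : G | ext x g ≠ 0} ≤ S :=
    (AddSubgroup.closure_le S).mpr (fun g hg => ⟨g, 0, hg, by simp [ext_zero], by simp⟩)
  exact hle hg

lemma chi_add (x y : Multiplicative P →* k) (hxy : ∀ g, ext x g ≠ 0 → ext y g ≠ 0)
    {g₁ g₂ : G} (h₁ : g₁ ∈ AddSubgroup.closure {g : G | ext x g ≠ 0})
    (h₂ : g₂ ∈ AddSubgroup.closure {g : G | ext x g ≠ 0}) :
    chi x y (g₁ + g₂) = chi x y g₁ * chi x y g₂ := by
  obtain ⟨a, b, ha, hb, rfl⟩ := mem_closure_rep x h₁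
  obtain ⟨c, d, hc, hd, rfl⟩ := mem_closure_rep x h₂
  have hac : ext x (a + c) ≠ 0 := by
    rw [ext_add x (mem_of_ext_ne_zero ha) (mem_of_ext_ne_zero hc)]
    exact mul_ne_zero ha hc
  have hbd : ext x (b + d) ≠ 0 := by
    rw [ext_add x (mem_of_ext_ne_zero hb) (mem_of_ext_ne_zero hd)]
    exact mul_ne_zero hb hd
  rw [chi_spec x y hxy ha hb rfl, chi_spec x y hxy hc hd rfl,
    chi_spec x y hxy hac hbd (by abel),
    ext_add x (mem_of_ext_ne_zero ha) (mem_of_ext_ne_zero hc),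
    ext_add x (mem_of_ext_ne_zero hb) (mem_of_ext_ne_zero hd),
    ext_add y (mem_of_ext_ne_zero ha) (mem_of_ext_ne_zero hc),
    ext_add y (mem_of_ext_ne_zero hb) (mem_of_ext_ne_zero hd)]
  have hya := hxy a ha
  have hyb := hxy b hb
  have hyc := hxy c hc
  have hyd := hxy d hd
  field_simp

end SameFaceAux

open SameFaceAux

/-- **Orbits and faces (fs case, arbitrary field).** Let `k` be a field, `G` a finitely
generated abelian group, and `P ⊆ G` a submonoid generating `G` as a group and saturated
in `G` (so `P` is fs with `P^gp = G`).  Two monoid homomorphisms `x, y : P → (k, ·)` have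
the same face `{p : x p ≠ 0} = {p : y p ≠ 0}` iff there is a group homomorphism
`g : G → kˣ` with `y p = g p · x p` for all `p ∈ P`. -/
theorem same_face_iff_twist_fs
    (k : Type*) [Field k]
    (G : Type*) [AddCommGroup G] (hG : AddGroup.FG G)
    (P : AddSubmonoid G)
    (hgen : AddSubgroup.closure (P : Set G) = ⊤)
    (hsat : ∀ (g : G) (n : ℕ), 0 < n → n • g ∈ P → g ∈ P)
    (x y : Multiplicative P →* k) :
    {p : P | x (Multiplicative.ofAdd p) ≠ 0} = {p : P | y (Multiplicative.ofAdd p) ≠ 0} ↔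
      ∃ g : Multiplicative G →* kˣ, ∀ p : P,
        y (Multiplicative.ofAdd p) =
          (g (Multiplicative.ofAdd (p : G)) : k) * x (Multiplicative.ofAdd p) := by
  constructor
  · intro hface
    -- extract the two-sided consequence of equal faces
    have hface' : ∀ p : P, x (ofAdd p) ≠ 0 ↔ y (ofAdd p) ≠ 0 := fun p =>
      Set.ext_iff.mp hface p
    have hxy : ∀ g : G, ext x g ≠ 0 → ext y g ≠ 0 := by
      intro g hg
      have hgP := mem_of_ext_ne_zero hg
      rw [show g = ((⟨g, hgP⟩ : P) : G) from rfl, ext_coe] at hg ⊢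
      exact (hface' _).mp hg
    set H : AddSubgroup G := AddSubgroup.closure {g : G | ext x g ≠ 0} with hH
    -- saturation: H is "pure" in G
    have hsatH : ∀ (g : G) (n : ℕ), 0 < n → n • g ∈ H → g ∈ H := by
      intro g n hn hng
      obtain ⟨a, b, ha, hb, hab⟩ := mem_closure_rep x hng
      obtain ⟨m, rfl⟩ := Nat.exists_eq_succ_of_ne_zero hn.ne'
      have haP := mem_of_ext_ne_zero ha
      have hbP := mem_of_ext_ne_zero hb
      have key : (m + 1) • (g + b) = a + m • b := by
        rw [smul_add, hab]; rw [succ_nsmul]; abel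
      have hgbP : g + b ∈ P := by
        refine hsat (g + b) (m + 1) (Nat.succ_pos m) ?_
        rw [key]
        exact P.add_mem haP (AddSubmonoid.nsmul_mem _ hbP m)
      have hgbx : ext x (g + b) ≠ 0 := by
        have h1 : ext x ((m + 1) • (g + b)) = (ext x (g + b)) ^ (m + 1) :=
          ext_nsmul x hgbP (m + 1)
        have h2 : ext x ((m + 1) • (g + b)) ≠ 0 := by
          rw [key, ext_add x haP (AddSubmonoid.nsmul_mem _ hbP m), ext_nsmul x hbP m]
          exact mul_ne_zero ha (pow_ne_zero m hb)
        intro h0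
        rw [h1, h0, zero_pow (Nat.succ_ne_zero m)] at h2
        exact h2 rfl
      have : g = (g + b) - b := by abel
      rw [this]
      exact sub_mem (AddSubgroup.subset_closure hgbx) (AddSubgroup.subset_closure hb)
    -- the quotient G/H is finitely generated and torsion-free, hence free
    let Q := G ⧸ H
    let π : G →+ Q := QuotientAddGroup.mk' H
    have hπ : Function.Surjective π := QuotientAddGroup.mk'_surjective H
    haveI : Module.Finite ℤ G := Module.Finite.iff_addGroup_fg.mpr hG
    haveI : Module.Finite ℤ Q := Module.Finite.of_surjective π.toIntLinearMap hπ
    haveI : NoZeroSMulDivisors ℤ Q := by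
      constructor
      intro n q hnq
      by_cases hn : n = 0
      · exact Or.inl hn
      · right
        obtain ⟨g, rfl⟩ := hπ q
        have hmem : n • g ∈ H := by
          have : π (n • g) = 0 := by rw [map_zsmul]; exact hnq
          rwa [← QuotientAddGroup.eq_zero_iff]
        have habs : (n.natAbs : ℕ) • g ∈ H := by
          rcases Int.natAbs_eq n with h | h
          · have : (n.natAbs : ℤ) • g = n • g := by rw [← h]
            rw [← natCast_zsmul]
            rwa [this]
          · have : (n.natAbs : ℤ) • g = -(n • g) := by rw [h]; simp [neg_zsmul]
            rw [← natCast_zsmul, this]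
            exact neg_mem hmem
        have hg : g ∈ H := hsatH g n.natAbs (Int.natAbs_pos.mpr hn) habs
        have : π g = 0 := (QuotientAddGroup.eq_zero_iff g).mpr hg
        exact this
    haveI : Module.Free ℤ Q := Module.free_of_finite_type_torsion_free'
    -- split the projection
    obtain ⟨s, hs⟩ := Module.projective_lifting_property π.toIntLinearMap LinearMap.id
      hπ
    have hsπ : ∀ q : Q, π (s q) = q := fun q => by
      have h := LinearMap.congr_fun hs q
      simpa using h
    have hmemH : ∀ g : G, g - s (π g) ∈ H := by
      intro g
      rw [← QuotientAddGroup.eq_zero_iff]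
      show π (g - s (π g)) = 0
      rw [map_sub, hsπ]
      simp
    -- build the character
    refine ⟨MonoidHom.mk' (fun v => Units.mk0 (chi x y (v.toAdd - s (π v.toAdd)))
      (chi_ne_zero x y hxy _)) ?_, ?_⟩
    · intro v w
      ext
      show chi x y ((v * w).toAdd - s (π (v * w).toAdd)) =
        chi x y (v.toAdd - s (π v.toAdd)) * chi x y (w.toAdd - s (π w.toAdd))
      have harg : (v * w).toAdd - s (π (v * w).toAdd) =
          (v.toAdd - s (π v.toAdd)) + (w.toAdd - s (π w.toAdd)) := by
        have : (v * w).toAdd = v.toAdd + w.toAdd := rfl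
        rw [this, map_add, map_add]
        abel
      rw [harg]
      exact chi_add x y hxy (hmemH _) (hmemH _)
    · intro p
      by_cases hp : x (ofAdd p) = 0
      · have hyp : y (ofAdd p) = 0 := by
          by_contra hyp
          exact (hface' p).mpr hyp hp
        rw [hp, hyp, mul_zero]
      · -- x p ≠ 0, so p ∈ face ⊆ H
        have hxp : ext x (p : G) ≠ 0 := by rwa [ext_coe]
        have hpH : (p : G) ∈ H := AddSubgroup.subset_closure hxp
        have hπp : π (p : G) = 0 := (QuotientAddGroup.eq_zero_iff _).mpr hpH
        show y (ofAdd p) =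
          (chi x y ((ofAdd (p : G)).toAdd - s (π (ofAdd (p : G)).toAdd)) : k) * x (ofAdd p)
        have harg : (ofAdd (p : G)).toAdd - s (π (ofAdd (p : G)).toAdd) = (p : G) := by
          have : (ofAdd (p : G)).toAdd = (p : G) := rfl
          rw [this, hπp, map_zero, sub_zero]
        rw [harg]
        have hzero : ext x (0 : G) ≠ 0 := by rw [ext_zero]; exact one_ne_zero
        rw [chi_spec x y hxy hxp hzero (by abel), ext_coe, ext_coe, ext_zero, ext_zero]
        have hyp : y (ofAdd p) ≠ 0 := (hface' p).mp hp
        field_simp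
  · rintro ⟨g, hg⟩
    ext p
    simp only [Set.mem_setOf_eq, hg p]
    constructor
    · intro h
      exact mul_ne_zero (Units.ne_zero _) h
    · intro h
      exact (mul_ne_zero_iff.mp h).2
end

section
/- Extension of real-valued characters: Let G be an abelian group and Q ⊆ P ⊆ G submonoids such that Q generates G as a group (hence so does P), Q is finitely generated, and Q is saturated in G (for all g ∈ G and integers n > 0, n • g ∈ Q implies g ∈ Q); thus Q is an fs monoid and the inclusion Q ⊆ P induces an isomorphism on Grothendieck groups. Let x : Q → ℝ be a monoid homomorphism into the multiplicative monoid of ℝ. If there exists a monoid homomorphism y : P → ℂ (into the multiplicative monoid of ℂ) whose restriction to Q is x (composed with the inclusion ℝ ⊆ ℂ), then there exists a monoid homomorphism z : P → ℝ whose restriction to Q is x. -/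
/-!
Let `F` be the set of `q ∈ Q` with `x q ≠ 0`. It is a face of `Q`, so the saturation of `Q`
makes the subgroup `H` generated by `F` saturated in `G`. Since `G` is finitely generated,
`G ⧸ H` is free and `H` is a direct summand of `G`; hence `x|_F : F → ℝˣ`, which extends to the
group completion `H` of `F`, extends further to a character `χ : G → ℝˣ`.
Then `z = |y| · sign χ` works: where `x ≠ 0` it equals `|x| · sign x = x`, and elsewhere
`|y| = |x| = 0`.
-/

open Multiplicative

theorem AddSubgroup.mem_closure_addSubmonoid_iff {G : Type*} [AddCommGroup G]
    (S : AddSubmonoid G) {g : G} :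
    g ∈ AddSubgroup.closure (S : Set G) ↔ ∃ a ∈ S, ∃ b ∈ S, a - b = g := by
  refine ⟨fun hg => ?_, fun ⟨a, ha, b, hb, hab⟩ =>
    hab ▸ sub_mem (subset_closure ha) (subset_closure hb)⟩
  induction hg using AddSubgroup.closure_induction with
  | mem g hg => exact ⟨g, hg, 0, S.zero_mem, sub_zero g⟩
  | zero => exact ⟨0, S.zero_mem, 0, S.zero_mem, sub_zero 0⟩
  | add _ _ _ _ ih ih' =>
    obtain ⟨a, ha, b, hb, rfl⟩ := ih
    obtain ⟨c, hc, d, hd, rfl⟩ := ih'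
    exact ⟨a + c, S.add_mem ha hc, b + d, S.add_mem hb hd, by abel⟩
  | neg _ _ ih =>
    obtain ⟨a, ha, b, hb, rfl⟩ := ih
    exact ⟨b, hb, a, ha, by abel⟩

theorem AddSubmonoid.exists_addMonoidHom_closure_extend {G A : Type*} [AddCommGroup G]
    [AddCommGroup A] (S : AddSubmonoid G) (f : S →+ A) :
    ∃ ψ : AddSubgroup.closure (S : Set G) →+ A,
      ∀ a : S, ψ ⟨a, AddSubgroup.subset_closure a.2⟩ = f a := by
  let ι : S →+ AddSubgroup.closure (S : Set G) :=
    AddSubmonoid.inclusion (S := S) (T := (AddSubgroup.closure (S : Set G)).toAddSubmonoid)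
      (fun a ha => AddSubgroup.subset_closure ha)
  have hι : (⊤ : AddSubmonoid S).IsLocalizationMap ι := by
    refine AddSubmonoid.isLocalizationMap_of_addGroup (fun a b h => ?_) fun g => ?_
    · exact Subtype.ext (congrArg (fun g : AddSubgroup.closure (S : Set G) => (g : G)) h)
    · obtain ⟨a, ha, b, hb, hab⟩ := (AddSubgroup.mem_closure_addSubmonoid_iff S).1 g.2
      exact ⟨⟨a, ha⟩, ⟨b, hb⟩, trivial, Subtype.ext hab.symm⟩
  let L : (⊤ : AddSubmonoid S).LocalizationMap (AddSubgroup.closure (S : Set G)) :=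
    ⟨ι.toAddHom, hι⟩
  exact ⟨L.lift (g := f) fun _ => AddGroup.isAddUnit _, L.lift_eq _⟩

theorem AddSubgroup.exists_retraction_of_nsmulSaturated {G : Type*} [AddCommGroup G]
    [AddGroup.FG G] {H : AddSubgroup G} (hH : H.NSMulSaturated) :
    ∃ r : G →+ H, ∀ h : H, r h = h := by
  let N := H.toIntSubmodule
  have : IsAddTorsionFree (G ⧸ N) := by
    refine isAddTorsionFree_iff_not_isOfFinAddOrder.2 fun a ha hfin => ha ?_
    obtain ⟨n, hn, hna⟩ := isOfFinAddOrder_iff_nsmul_eq_zero.1 hfin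
    induction a using Submodule.Quotient.induction_on with | H g => ?_
    rw [← Submodule.Quotient.mk_smul, Submodule.Quotient.mk_eq_zero] at hna
    rw [Submodule.Quotient.mk_eq_zero]
    exact (hH hna).resolve_left hn.ne'
  have : Module.Finite ℤ G := Module.Finite.iff_addGroup_fg.2 ‹_›
  obtain ⟨s, hs⟩ := Module.projective_lifting_property N.mkQ LinearMap.id N.mkQ_surjective
  have hmem (g : G) : g - s (N.mkQ g) ∈ N := by
    rw [← Submodule.Quotient.mk_eq_zero, Submodule.Quotient.mk_sub, sub_eq_zero]
    exact congr($hs (N.mkQ g)).symm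
  refine ⟨(AddMonoidHom.id G - s.toAddMonoidHom.comp N.mkQ.toAddMonoidHom).codRestrict H hmem,
    fun h => Subtype.ext ?_⟩
  change (h : G) - s (Submodule.Quotient.mk (h : G)) = h
  rw [(Submodule.Quotient.mk_eq_zero N).2 h.2, map_zero, sub_zero]

theorem AddSubmonoid.exists_addMonoidHom_extend_of_nsmulSaturated {G A : Type*} [AddCommGroup G]
    [AddGroup.FG G] [AddCommGroup A] (S : AddSubmonoid G)
    (hS : (AddSubgroup.closure (S : Set G)).NSMulSaturated) (f : S →+ A) :
    ∃ χ : G →+ A, ∀ a : S, χ a = f a := by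
  obtain ⟨ψ, hψ⟩ := S.exists_addMonoidHom_closure_extend f
  obtain ⟨r, hr⟩ := AddSubgroup.exists_retraction_of_nsmulSaturated hS
  exact ⟨ψ.comp r, fun a => (congrArg ψ (hr ⟨a, AddSubgroup.subset_closure a.2⟩)).trans (hψ a)⟩

theorem AddGroup.fg_of_addSubmonoid_fg {G : Type*} [AddGroup G] {Q : AddSubmonoid G}
    (hQ : Q.FG) (hgen : AddSubgroup.closure (Q : Set G) = ⊤) : AddGroup.FG G := by
  obtain ⟨S, rfl⟩ := hQ
  refine ⟨⟨S, eq_top_iff.2 (hgen ▸ (AddSubgroup.closure_le _).2 ?_)⟩⟩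
  exact AddSubgroup.le_closure_toAddSubmonoid _

namespace AddSubmonoid

variable {G M₀ : Type*} [AddCommGroup G] {Q : AddSubmonoid G}

theorem map_ofAdd_mk_add {M : Type*} [MulOneClass M] (x : Multiplicative Q →* M) {a b : G}
    (ha : a ∈ Q) (hb : b ∈ Q) :
    x (ofAdd ⟨a + b, Q.add_mem ha hb⟩) = x (ofAdd ⟨a, ha⟩) * x (ofAdd ⟨b, hb⟩) := by
  rw [← map_mul, ← ofAdd_add, mk_add_mk]

section MonoidWithZero

variable [MonoidWithZero M₀] [NoZeroDivisors M₀] [Nontrivial M₀] (x : Multiplicative Q →* M₀)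

def supportFace : AddSubmonoid G where
  carrier := {g | ∃ hg : g ∈ Q, x (ofAdd ⟨g, hg⟩) ≠ 0}
  zero_mem' := ⟨Q.zero_mem, by simp [← ZeroMemClass.zero_def]⟩
  add_mem' := fun ⟨ha, hxa⟩ ⟨hb, hxb⟩ =>
    ⟨Q.add_mem ha hb, by rw [map_ofAdd_mk_add x ha hb]; exact mul_ne_zero hxa hxb⟩

variable {x}

theorem mem_supportFace_of_nsmul_mem {c : G} (hc : c ∈ Q) {n : ℕ} (hn : n ≠ 0)
    (h : n • c ∈ supportFace x) : c ∈ supportFace x := by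
  obtain ⟨hnc, hx⟩ := h
  refine ⟨hc, fun h0 => hx ?_⟩
  rw [show (⟨n • c, hnc⟩ : Q) = n • ⟨c, hc⟩ from rfl, ofAdd_nsmul, map_pow, h0, zero_pow hn]

theorem closure_supportFace_nsmulSaturated (hsat : Q.NSMulSaturated) :
    (AddSubgroup.closure (supportFace x : Set G)).NSMulSaturated := by
  rintro (_ | m) g hg
  · exact .inl rfl
  refine .inr ?_
  obtain ⟨a, ha, b, hb, hab⟩ := (AddSubgroup.mem_closure_addSubmonoid_iff _).1 hg
  have hgb : (m + 1) • (g + b) = a + m • b := by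
    rw [smul_add, ← hab, succ_nsmul]; abel
  have hgbQ : g + b ∈ Q :=
    (hsat (hgb ▸ Q.add_mem ha.1 (Q.nsmul_mem hb.1 m))).resolve_left m.succ_ne_zero
  have hgbF : g + b ∈ supportFace x :=
    mem_supportFace_of_nsmul_mem hgbQ m.succ_ne_zero
      (hgb ▸ (supportFace x).add_mem ha ((supportFace x).nsmul_mem hb m))
  simpa using sub_mem (AddSubgroup.subset_closure hgbF) (AddSubgroup.subset_closure hb)

end MonoidWithZero

variable [CommGroupWithZero M₀] (x : Multiplicative Q →* M₀)

def supportFaceUnitsHom : supportFace x →+ Additive M₀ˣ where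
  toFun a := .ofMul (Units.mk0 _ a.2.2)
  map_zero' := by ext; simp [← ZeroMemClass.zero_def]
  map_add' a b := by ext; exact map_ofAdd_mk_add x a.2.1 b.2.1

@[simp]
theorem coe_toMul_supportFaceUnitsHom (a : supportFace x) :
    ((supportFaceUnitsHom x a).toMul : M₀) = x (ofAdd ⟨a, a.2.1⟩) :=
  rfl

end AddSubmonoid

/-- **Extension of real-valued characters.** Let `G` be an abelian group and
`Q ⊆ P ⊆ G` submonoids with `Q` finitely generated, saturated in `G`, and generating `G`
as a group (so `Q` is fs and `Q ⊆ P` induces an isomorphism on Grothendieck groups).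
Let `x : Q → (ℝ, ·)` be a monoid homomorphism.  If `x` (viewed in `ℂ`) extends to a monoid
homomorphism `y : P → (ℂ, ·)`, then `x` extends to a monoid homomorphism
`z : P → (ℝ, ·)`. -/
theorem extend_real_character
    (G : Type*) [AddCommGroup G] (Q P : AddSubmonoid G) (hQP : Q ≤ P)
    (hgen : AddSubgroup.closure (Q : Set G) = ⊤)
    (hQfg : Q.FG)
    (hsat : ∀ (g : G) (n : ℕ), 0 < n → n • g ∈ Q → g ∈ Q)
    (x : Multiplicative Q →* ℝ)
    (y : Multiplicative P →* ℂ)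
    (hy : ∀ q : Q, y (Multiplicative.ofAdd (AddSubmonoid.inclusion hQP q)) =
      ((x (Multiplicative.ofAdd q) : ℝ) : ℂ)) :
    ∃ z : Multiplicative P →* ℝ, ∀ q : Q,
      z (Multiplicative.ofAdd (AddSubmonoid.inclusion hQP q)) =
        x (Multiplicative.ofAdd q) := by
  have : AddGroup.FG G := AddGroup.fg_of_addSubmonoid_fg hQfg hgen
  have hQsat : Q.NSMulSaturated := fun n g hg => n.eq_zero_or_pos.imp_right (hsat g n · hg)
  obtain ⟨χ, hχ⟩ := (AddSubmonoid.supportFace x).exists_addMonoidHom_extend_of_nsmulSaturated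
    (AddSubmonoid.closure_supportFace_nsmulSaturated hQsat) (AddSubmonoid.supportFaceUnitsHom x)
  let sign : Multiplicative G →* ℝ := (SignType.castHom.toMonoidHom.comp signHom.toMonoidHom).comp
    ((Units.coeHom ℝ).comp χ.toMultiplicativeLeft)
  refine ⟨normHom.toMonoidHom.comp y * sign.comp P.subtype.toMultiplicative, fun q => ?_⟩
  by_cases hxq : x (ofAdd q) = 0
  · simp [hy, hxq]
  · have hχq := hχ ⟨q, q.2, hxq⟩
    simp [hy, sign, hχq]
end

section
/- Let f : A → B be an injective homomorphism of finitely generated abelian groups. Then the monoid algebra ℤ[B] = AddMonoidAlgebra ℤ B, regarded as a module over ℤ[A] = AddMonoidAlgebra ℤ A via the ring homomorphism induced by f (mapping each basis element [a] to [f(a)]), is faithfully flat. -/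
/-!
Choose a representative `q.out ∈ B` of every coset `q` of `f(A)`. Since `f` is injective, every
`b ∈ B` is uniquely `q.out + f a`, so the monomials `[q.out]` form a basis of `ℤ[B]` over `ℤ[A]`.
A free module on a nonempty basis is faithfully flat.
-/

namespace AddMonoidHom

variable {A B : Type*} [AddCommGroup A] [AddCommGroup B] {f : A →+ B}

noncomputable def quotientRangeProdEquiv (hf : Function.Injective f) : (B ⧸ f.range) × A ≃ B :=
  Equiv.ofBijective (fun p ↦ p.1.out + f p.2) <| by
    constructor
    · rintro ⟨q, a⟩ ⟨q', a'⟩ h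
      have hq : q = q' := by
        have hmk (a : A) : (f a : B ⧸ f.range) = 0 :=
          (QuotientAddGroup.eq_zero_iff _).mpr (mem_range.mpr ⟨a, rfl⟩)
        simpa [hmk] using congrArg (QuotientAddGroup.mk (s := f.range)) h
      subst hq
      simpa using hf (add_left_cancel h)
    · intro b
      obtain ⟨a, ha⟩ : b - (b : B ⧸ f.range).out ∈ f.range := by
        rw [← QuotientAddGroup.eq_zero_iff, QuotientAddGroup.mk_sub, QuotientAddGroup.out_eq',
          sub_self]
      exact ⟨(b, a), by simp [ha]⟩

lemma quotientRangeProdEquiv_apply (hf : Function.Injective f) (q : B ⧸ f.range) (a : A) :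
    quotientRangeProdEquiv hf (q, a) = q.out + f a := rfl

end AddMonoidHom

namespace AddMonoidAlgebra

variable {k A B : Type*} [AddCommGroup A] [AddCommGroup B] {f : A →+ B}

section CommSemiring

variable [CommSemiring k]

noncomputable def quotientRangeFinsuppAddEquiv (hf : Function.Injective f) :
    ((B ⧸ f.range) →₀ AddMonoidAlgebra k A) ≃+ AddMonoidAlgebra k B :=
  (Finsupp.mapRange.addEquiv coeffAddEquiv).trans <| Finsupp.curryAddEquiv.symm.trans <|
    (Finsupp.domCongr (f.quotientRangeProdEquiv hf)).trans coeffAddEquiv.symm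

lemma quotientRangeFinsuppAddEquiv_single (hf : Function.Injective f) (q : B ⧸ f.range)
    (a : A) (c : k) :
    quotientRangeFinsuppAddEquiv hf (Finsupp.single q (single a c)) = single (q.out + f a) c := by
  simp [quotientRangeFinsuppAddEquiv, AddMonoidHom.quotientRangeProdEquiv_apply]

variable [Algebra (AddMonoidAlgebra k A) (AddMonoidAlgebra k B)]

lemma linearCombination_single_out
    (h : algebraMap (AddMonoidAlgebra k A) (AddMonoidAlgebra k B) = mapDomainRingHom k f)
    (hf : Function.Injective f) :
    ⇑(Finsupp.linearCombination (AddMonoidAlgebra k A)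
      fun q : B ⧸ f.range ↦ (single q.out 1 : AddMonoidAlgebra k B)) =
      quotientRangeFinsuppAddEquiv hf := by
  suffices (Finsupp.linearCombination (AddMonoidAlgebra k A)
      fun q : B ⧸ f.range ↦ (single q.out 1 : AddMonoidAlgebra k B)).toAddMonoidHom =
      (quotientRangeFinsuppAddEquiv hf).toAddMonoidHom from congrArg DFunLike.coe this
  ext q a c
  simp [quotientRangeFinsuppAddEquiv_single, Algebra.smul_def, h, add_comm]

noncomputable def quotientRangeFinsuppLinearEquiv
    (h : algebraMap (AddMonoidAlgebra k A) (AddMonoidAlgebra k B) = mapDomainRingHom k f)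
    (hf : Function.Injective f) :
    ((B ⧸ f.range) →₀ AddMonoidAlgebra k A) ≃ₗ[AddMonoidAlgebra k A] AddMonoidAlgebra k B :=
  .ofBijective (Finsupp.linearCombination (AddMonoidAlgebra k A)
      fun q : B ⧸ f.range ↦ (single q.out 1 : AddMonoidAlgebra k B)) <| by
    rw [linearCombination_single_out h hf]
    exact (quotientRangeFinsuppAddEquiv hf).bijective

end CommSemiring

theorem faithfullyFlat_of_injective [CommRing k]
    [Algebra (AddMonoidAlgebra k A) (AddMonoidAlgebra k B)]
    (h : algebraMap (AddMonoidAlgebra k A) (AddMonoidAlgebra k B) = mapDomainRingHom k f)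
    (hf : Function.Injective f) :
    Module.FaithfullyFlat (AddMonoidAlgebra k A) (AddMonoidAlgebra k B) :=
  have : Nonempty (B ⧸ f.range) := ⟨0⟩
  .of_linearEquiv _ _ (quotientRangeFinsuppLinearEquiv h hf).symm

end AddMonoidAlgebra

theorem monoid_algebra_faithfully_flat_of_injective_general
    (A B : Type*) [AddCommGroup A] [AddCommGroup B]
    (f : A →+ B) (hf : Function.Injective f) :
    letI : Algebra (AddMonoidAlgebra ℤ A) (AddMonoidAlgebra ℤ B) :=
      (AddMonoidAlgebra.mapDomainRingHom ℤ f).toAlgebra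
    Module.FaithfullyFlat (AddMonoidAlgebra ℤ A) (AddMonoidAlgebra ℤ B) :=
  letI : Algebra (AddMonoidAlgebra ℤ A) (AddMonoidAlgebra ℤ B) :=
    (AddMonoidAlgebra.mapDomainRingHom ℤ f).toAlgebra
  AddMonoidAlgebra.faithfullyFlat_of_injective rfl hf

/-- Let `f : A → B` be an injective homomorphism of finitely generated abelian groups.
Then `ℤ[B]`, regarded as a `ℤ[A]`-module via the induced ring homomorphism
`ℤ[A] → ℤ[B]`, `[a] ↦ [f a]`, is faithfully flat. -/
theorem monoid_algebra_faithfully_flat_of_injective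
    (A B : Type*) [AddCommGroup A] [AddCommGroup B]
    (hA : AddGroup.FG A) (hB : AddGroup.FG B)
    (f : A →+ B) (hf : Function.Injective f) :
    letI : Algebra (AddMonoidAlgebra ℤ A) (AddMonoidAlgebra ℤ B) :=
      (AddMonoidAlgebra.mapDomainRingHom ℤ f).toAlgebra
    Module.FaithfullyFlat (AddMonoidAlgebra ℤ A) (AddMonoidAlgebra ℤ B) :=
  monoid_algebra_faithfully_flat_of_injective_general A B f hf
end

section
/- Chart production: Let G be an abelian group generated by a submonoid P, and let U = P ∩ (−P) be the (sub)group of units of P. Let A be an abelian group and h : A → G a group homomorphism such that for every p ∈ P there exist a ∈ A and u ∈ U with p = h(a) + u. Set Q := h⁻¹(P), a submonoid of A. Then: (i) Q ∩ (−Q) = h⁻¹(U); (ii) the induced map on sharpenings is an isomorphism, i.e., for every p ∈ P there exist a ∈ Q and u ∈ U with p = h(a) + u, and whenever a₁, a₂ ∈ Q satisfy h(a₁) − h(a₂) ∈ U, one has a₁ − a₂ ∈ Q ∩ (−Q); (iii) if moreover A is finitely generated and there is a finite subset S ⊆ P such that every element of P is a sum of elements of S ∪ U, then Q is a finitely generated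 monoid. -/
/-!
A unit of `Q = h⁻¹(P)` is an element mapping into `U = P ∩ (-P)`, which gives (i) and the
injectivity in (ii); an element `p = h a + u` of `P` with `u ∈ U` already has `h a = p - u ∈ P`,
which gives the surjectivity. For (iii), lift the finite set `S` to `a_s ∈ Q` with
`s = h a_s + u_s`. Every `q ∈ Q` then has `h q = h b + u` with `b` in the monoid generated by the
`a_s` and `u ∈ U`, so `q - b ∈ h⁻¹(U)`; hence `Q` is generated by the `a_s` together with the
subgroup `h⁻¹(U)`, which is finitely generated because `A` is a finitely generated abelian group.
-/

theorem AddSubgroup.fg_of_addGroup_fg {A : Type*} [AddCommGroup A] [AddGroup.FG A]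
    (K : AddSubgroup A) : K.FG := by
  have : Module.Finite ℤ A := Module.Finite.iff_addGroup_fg.mpr ‹_›
  simpa using (Submodule.fg_iff_addSubgroup_fg _).mp
    (IsNoetherian.noetherian (AddSubgroup.toIntSubmodule K))

namespace AddSubmonoid

variable {G A : Type*} [AddCommGroup G] [AddCommGroup A]

def unitSubgroup (P : AddSubmonoid G) : AddSubgroup G where
  carrier := {g | g ∈ P ∧ -g ∈ P}
  zero_mem' := ⟨P.zero_mem, by rw [neg_zero]; exact P.zero_mem⟩
  add_mem' ha hb := ⟨P.add_mem ha.1 hb.1, by rw [neg_add]; exact P.add_mem ha.2 hb.2⟩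
  neg_mem' ha := ⟨ha.2, by rw [neg_neg]; exact ha.1⟩

variable {P : AddSubmonoid G}

@[simp]
theorem mem_unitSubgroup {g : G} : g ∈ P.unitSubgroup ↔ g ∈ P ∧ -g ∈ P :=
  Iff.rfl

theorem unitSubgroup_le (P : AddSubmonoid G) : P.unitSubgroup.toAddSubmonoid ≤ P :=
  fun _ hg => hg.1

theorem comap_unitSubgroup (P : AddSubmonoid G) (h : A →+ G) :
    (P.comap h).unitSubgroup = P.unitSubgroup.comap h := by
  ext a
  simp

theorem mem_of_add_mem_of_mem_unitSubgroup {g u : G} (hgu : g + u ∈ P)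
    (hu : u ∈ P.unitSubgroup) : g ∈ P := by
  simpa using P.add_mem hgu hu.2

theorem exists_mem_comap_add_mem_unitSubgroup {h : A →+ G}
    (hlift : ∀ p ∈ P, ∃ a : A, ∃ u ∈ P.unitSubgroup, p = h a + u) {p : G} (hp : p ∈ P) :
    ∃ a ∈ P.comap h, ∃ u ∈ P.unitSubgroup, p = h a + u := by
  obtain ⟨a, u, hu, rfl⟩ := hlift p hp
  exact ⟨a, mem_of_add_mem_of_mem_unitSubgroup (P := P) hp hu, u, hu, rfl⟩

theorem comap_eq_sup_unitSubgroup {h : A →+ G} {N : AddSubmonoid A} (hN : N ≤ P.comap h)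
    (hP : P ≤ N.map h ⊔ P.unitSubgroup.toAddSubmonoid) :
    P.comap h = N ⊔ (P.comap h).unitSubgroup.toAddSubmonoid := by
  refine le_antisymm (fun q hq => ?_) (sup_le hN (unitSubgroup_le _))
  obtain ⟨_, ⟨b, hb, rfl⟩, u, hu, hbu⟩ := mem_sup.mp (hP hq)
  have hqb : q - b ∈ (P.comap h).unitSubgroup := by
    rw [comap_unitSubgroup, AddSubgroup.mem_comap, map_sub, ← hbu, add_sub_cancel_left]
    exact hu
  exact mem_sup.mpr ⟨b, hb, q - b, hqb, add_sub_cancel b q⟩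

theorem fg_comap_of_le_closure [AddGroup.FG A] {h : A →+ G}
    (hlift : ∀ p ∈ P, ∃ a : A, ∃ u ∈ P.unitSubgroup, p = h a + u) {S : Set G} (hS : S.Finite)
    (hSP : S ⊆ P) (hP : P ≤ closure (S ∪ P.unitSubgroup)) : (P.comap h).FG := by
  choose! f hfQ u hu hf using
    fun s (hs : s ∈ S) => exists_mem_comap_add_mem_unitSubgroup hlift (hSP hs)
  have hN : closure (f '' S) ≤ P.comap h :=
    closure_le.mpr (Set.image_subset_iff.mpr hfQ)
  have hP' : P ≤ (closure (f '' S)).map h ⊔ P.unitSubgroup.toAddSubmonoid := by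
    refine hP.trans (closure_le.mpr (Set.union_subset (fun s hs => ?_) ?_))
    · exact mem_sup.mpr ⟨h (f s), mem_map_of_mem _ (subset_closure (Set.mem_image_of_mem f hs)),
        u s, hu s hs, (hf s hs).symm⟩
    · exact le_sup_right (a := (closure (f '' S)).map h)
  rw [comap_eq_sup_unitSubgroup hN hP']
  exact (fg_iff _ |>.mpr ⟨_, rfl, hS.image f⟩).sup
    ((AddSubgroup.fg_iff_addSubmonoid_fg _).mp (AddSubgroup.fg_of_addGroup_fg _))

end AddSubmonoid

open AddSubmonoid in
theorem chart_production_general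
    (G : Type*) [AddCommGroup G] (P : AddSubmonoid G)
    (A : Type*) [AddCommGroup A] (h : A →+ G)
    (hsurj : ∀ p ∈ P, ∃ a : A, ∃ u : G, (u ∈ P ∧ -u ∈ P) ∧ p = h a + u) :
    (∀ a : A, (a ∈ P.comap h ∧ -a ∈ P.comap h) ↔ (h a ∈ P ∧ -(h a) ∈ P)) ∧
    (∀ p ∈ P, ∃ a ∈ P.comap h, ∃ u : G, (u ∈ P ∧ -u ∈ P) ∧ p = h a + u) ∧
    (∀ a₁ a₂ : A, a₁ ∈ P.comap h → a₂ ∈ P.comap h →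
      (h a₁ - h a₂ ∈ P ∧ -(h a₁ - h a₂) ∈ P) →
      (a₁ - a₂ ∈ P.comap h ∧ -(a₁ - a₂) ∈ P.comap h)) ∧
    (AddGroup.FG A →
      (∃ S : Finset G, ↑S ⊆ (P : Set G) ∧
        ∀ p ∈ P, p ∈ AddSubmonoid.closure (↑S ∪ {u : G | u ∈ P ∧ -u ∈ P})) →
      (P.comap h).FG) := by
  have units_comap (a : A) := SetLike.ext_iff.mp (comap_unitSubgroup P h) a
  refine ⟨units_comap, fun p hp => exists_mem_comap_add_mem_unitSubgroup hsurj hp,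
    fun a₁ a₂ _ _ hu => (units_comap _).mpr
      (show h (a₁ - a₂) ∈ P.unitSubgroup by rwa [map_sub]), ?_⟩
  rintro _ ⟨S, hSP, hS⟩
  exact fg_comap_of_le_closure hsurj S.finite_toSet hSP hS

/-- **Chart production.** Let `G` be an abelian group generated by a submonoid `P` (so
`G = P^gp`), with unit group `U = P ∩ (−P)`.  Let `h : A → G` be a homomorphism of
abelian groups such that every `p ∈ P` can be written as `p = h a + u` with `u ∈ U`
(the image of `A` in `G ⧸ U` contains the sharpening of `P`).  Let `Q := h⁻¹(P)`.
Then (i) the units of `Q` are `h⁻¹(U)`; (ii) the induced map of sharpenings `Q̄ → P̄` is an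
isomorphism (surjective and injective, as spelled out); and (iii) if `A` is finitely
generated and `P̄` is finitely generated (there is a finite `S ⊆ P` with every element of
`P` a sum of elements of `S ∪ U`), then `Q` is a finitely generated (hence fine)
monoid. -/
theorem chart_production
    (G : Type*) [AddCommGroup G] (P : AddSubmonoid G)
    (hgen : AddSubgroup.closure (P : Set G) = ⊤)
    (A : Type*) [AddCommGroup A] (h : A →+ G)
    (hsurj : ∀ p ∈ P, ∃ a : A, ∃ u : G, (u ∈ P ∧ -u ∈ P) ∧ p = h a + u) :
    (∀ a : A, (a ∈ P.comap h ∧ -a ∈ P.comap h) ↔ (h a ∈ P ∧ -(h a) ∈ P)) ∧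
    (∀ p ∈ P, ∃ a ∈ P.comap h, ∃ u : G, (u ∈ P ∧ -u ∈ P) ∧ p = h a + u) ∧
    (∀ a₁ a₂ : A, a₁ ∈ P.comap h → a₂ ∈ P.comap h →
      (h a₁ - h a₂ ∈ P ∧ -(h a₁ - h a₂) ∈ P) →
      (a₁ - a₂ ∈ P.comap h ∧ -(a₁ - a₂) ∈ P.comap h)) ∧
    (AddGroup.FG A →
      (∃ S : Finset G, ↑S ⊆ (P : Set G) ∧
        ∀ p ∈ P, p ∈ AddSubmonoid.closure (↑S ∪ {u : G | u ∈ P ∧ -u ∈ P})) →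
      (P.comap h).FG) :=
  chart_production_general G P A h hsurj
end

section
/- Let h : Q → P be a surjective homomorphism of commutative monoids with P finitely generated, and suppose h is strict: whenever h(q₁) = h(q₂) + u for some additive unit u of P, there is an additive unit v of Q with q₁ = q₂ + v. Then there exists a finitely generated submonoid S ⊆ Q such that the restriction h|S : S → P is surjective and strict, i.e., whenever s₁, s₂ ∈ S satisfy h(s₁) = h(s₂) + u for an additive unit u of P, there exists v ∈ S with −v ∈ S (an additive unit of the monoid S) such that s₁ = s₂ + v. -/
/-!
Lift a finite generating set of `P` to `q : ι → Q`. On `ι →₀ ℕ`, the relation "the images in `P`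
differ by a unit" is a congruence, hence finitely generated by Rédei's theorem, and strictness of
`h` turns each of its finitely many generators into a unit of `Q`. Adjoining these units and their
negatives to `closure (range q)` gives `S`.
-/

theorem AddMonoidAlgebra.mapDomainRingHom_single_sub_single_eq_zero_iff
    {k M : Type*} [Ring k] [Nontrivial k] [AddMonoid M] (c : AddCon M) (a b : M) :
    mapDomainRingHom k c.mk' (single a 1 - single b 1) = 0 ↔ c a b := by
  rw [map_sub, sub_eq_zero, mapDomainRingHom_apply, mapDomainRingHom_apply, mapDomain_single,
    mapDomain_single, single_left_inj one_ne_zero, AddCon.coe_mk', c.eq]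

open AddMonoidAlgebra in
/-- Rédei's theorem. The binomials `X^a - X^b` with `c a b` span an ideal of `ℚ[σ]`, and a finite
subfamily spanning the same ideal (Hilbert's basis theorem) already generates `c`. -/
theorem AddCon.exists_finset_addConGen_eq {σ : Type*} [Finite σ] (c : AddCon (σ →₀ ℕ)) :
    ∃ F : Finset ((σ →₀ ℕ) × (σ →₀ ℕ)), addConGen (fun a b => (a, b) ∈ F) = c := by
  classical
  let binomial (p : (σ →₀ ℕ) × (σ →₀ ℕ)) : AddMonoidAlgebra ℚ (σ →₀ ℕ) :=
    single p.1 1 - single p.2 1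
  have : IsNoetherianRing (AddMonoidAlgebra ℚ (σ →₀ ℕ)) :=
    inferInstanceAs (IsNoetherianRing (MvPolynomial σ ℚ))
  obtain ⟨t, ht_sub, ht_span⟩ := (Submodule.fg_span_iff_fg_span_finset_subset _).1
    (IsNoetherian.noetherian (Ideal.span (binomial '' {p | c p.1 p.2})))
  obtain ⟨F, hF_sub, rfl⟩ := Finset.subset_set_image_iff.1 ht_sub
  refine ⟨F, le_antisymm (AddCon.addConGen_le.2 fun a b hab => hF_sub hab) fun a b hab => ?_⟩
  rw [← mapDomainRingHom_single_sub_single_eq_zero_iff (k := ℚ), ← RingHom.mem_ker]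
  have hmem : binomial (a, b) ∈ Ideal.span (binomial '' {p | c p.1 p.2}) :=
    Ideal.subset_span ⟨(a, b), hab, rfl⟩
  rw [Ideal.span, ht_span, Finset.coe_image] at hmem
  refine Ideal.span_le.2 ?_ hmem
  rintro _ ⟨p, hp, rfl⟩
  exact (mapDomainRingHom_single_sub_single_eq_zero_iff _ _ _).2 (AddCon.le_addConGen _ _ hp)

theorem Finsupp.mrange_liftAddHom_multiplesHom {ι M : Type*} [AddCommMonoid M] (q : ι → M) :
    AddMonoidHom.mrange (liftAddHom fun i => multiplesHom M (q i)) =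
      AddSubmonoid.closure (Set.range q) := by
  ext x
  rw [AddSubmonoid.mem_closure_range_iff, AddMonoidHom.mem_mrange]
  simp only [liftAddHom_apply, eq_comm]
  rfl

namespace AddCon

variable {M : Type*} [AddCommMonoid M]

/-- For `G = ⊤` the quotient is the sharpening of `M`. -/
def ofAddUnits (G : AddSubgroup (AddUnits M)) : AddCon M where
  r a b := ∃ g ∈ G, a = b + g
  iseqv :=
    { refl _ := ⟨0, G.zero_mem, (add_zero _).symm⟩
      symm := fun ⟨g, hg, hab⟩ =>
        ⟨-g, G.neg_mem hg, by rw [hab, add_assoc, AddUnits.add_neg, add_zero]⟩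
      trans := fun ⟨g, hg, hab⟩ ⟨g', hg', hbc⟩ =>
        ⟨g' + g, G.add_mem hg' hg, by rw [hab, hbc, AddUnits.val_add, add_assoc]⟩ }
  add' := fun ⟨g, hg, hab⟩ ⟨g', hg', hcd⟩ =>
    ⟨g + g', G.add_mem hg hg', by rw [hab, hcd, AddUnits.val_add, add_add_add_comm]⟩

theorem ofAddUnits_top_iff {a b : M} :
    ofAddUnits (⊤ : AddSubgroup (AddUnits M)) a b ↔ ∃ u, IsAddUnit u ∧ a = b + u := by
  simp [ofAddUnits, IsAddUnit]

theorem ofAddUnits_le_comap {N : Type*} [AddCommMonoid N] (f : M →+ N)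
    (G : AddSubgroup (AddUnits M)) :
    ofAddUnits G ≤ (ofAddUnits (⊤ : AddSubgroup (AddUnits N))).comap f (map_add f) :=
  fun _ _ ⟨g, _, hab⟩ => ⟨AddUnits.map f g, trivial, by rw [hab, map_add]; rfl⟩

/-- Every element of `S₀ ⊔ G` is `ofAddUnits G`-related to an element of `S₀`. -/
theorem ofAddUnits_of_mem_sup {K : AddCon M} {G : AddSubgroup (AddUnits M)}
    {S₀ : AddSubmonoid M} (hGK : ofAddUnits G ≤ K)
    (hS₀ : ∀ a ∈ S₀, ∀ b ∈ S₀, K a b → ofAddUnits G a b) {a b : M}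
    (ha : a ∈ S₀ ⊔ G.toAddSubmonoid.map (AddUnits.coeHom M))
    (hb : b ∈ S₀ ⊔ G.toAddSubmonoid.map (AddUnits.coeHom M)) (hab : K a b) :
    ofAddUnits G a b := by
  obtain ⟨a₀, ha₀, _, ⟨g, hg, rfl⟩, rfl⟩ := AddSubmonoid.mem_sup.1 ha
  obtain ⟨b₀, hb₀, _, ⟨g', hg', rfl⟩, rfl⟩ := AddSubmonoid.mem_sup.1 hb
  have ha₀' : ofAddUnits G (a₀ + g) a₀ := ⟨g, hg, rfl⟩
  have hb₀' : ofAddUnits G (b₀ + g') b₀ := ⟨g', hg', rfl⟩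
  have hab₀ : K a₀ b₀ := K.trans (K.symm (hGK ha₀')) (K.trans hab (hGK hb₀'))
  exact (ofAddUnits G).trans ha₀' ((ofAddUnits G).trans (hS₀ a₀ ha₀ b₀ hb₀ hab₀)
    ((ofAddUnits G).symm hb₀'))

/-- Present `closure (range q)` as a quotient of `ι →₀ ℕ` and apply Rédei's theorem to the
pullback of `K`. -/
theorem exists_fg_ofAddUnits_of_mem_closure {ι : Type*} [Finite ι] (q : ι → M) (K : AddCon M)
    (hK : K ≤ ofAddUnits ⊤) :
    ∃ G : AddSubgroup (AddUnits M), G.FG ∧ ∀ a ∈ AddSubmonoid.closure (Set.range q),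
      ∀ b ∈ AddSubmonoid.closure (Set.range q), K a b → ofAddUnits G a b := by
  classical
  set π : (ι →₀ ℕ) →+ M := Finsupp.liftAddHom fun i => multiplesHom M (q i)
  obtain ⟨F, hF⟩ := (K.comap π (map_add π)).exists_finset_addConGen_eq
  have hunit (p) (hp : p ∈ F) : ∃ g : AddUnits M, π p.1 = π p.2 + g := by
    obtain ⟨g, -, hg⟩ := hK (hF ▸ le_addConGen _ _ hp : K.comap π (map_add π) p.1 p.2)
    exact ⟨g, hg⟩
  choose! g hg using hunit
  let G := AddSubgroup.closure (F.image g : Set (AddUnits M))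
  have hπ : K.comap π (map_add π) ≤ (ofAddUnits G).comap π (map_add π) :=
    hF ▸ addConGen_le.2 fun a b hab =>
      ⟨g (a, b), AddSubgroup.subset_closure (Finset.mem_image_of_mem g hab), hg _ hab⟩
  refine ⟨G, ⟨F.image g, rfl⟩, ?_⟩
  rw [← Finsupp.mrange_liftAddHom_multiplesHom]
  rintro _ ⟨a, rfl⟩ _ ⟨b, rfl⟩ hab
  exact hπ hab

end AddCon

open AddCon AddSubmonoid in
/-- Let `h : Q → P` be a strict, surjective homomorphism of commutative monoids with `P`
finitely generated.  Then there is a finitely generated submonoid `S ⊆ Q` such that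
`h|S : S → P` is surjective and strict: whenever `s₁, s₂ ∈ S` satisfy `h s₁ = h s₂ + u`
for an additive unit `u` of `P`, there is an additive unit `v` of the monoid `S`
(i.e. `v ∈ S` with an additive inverse in `S`) such that `s₁ = s₂ + v`. -/
theorem strict_surjection_restricts_to_finitely_generated
    (Q P : Type*) [AddCommMonoid Q] [AddCommMonoid P]
    (hPfg : AddMonoid.FG P)
    (h : Q →+ P) (hsurj : Function.Surjective h)
    (hstrict : ∀ q₁ q₂ : Q, ∀ u : P, IsAddUnit u → h q₁ = h q₂ + u →
      ∃ v : Q, IsAddUnit v ∧ q₁ = q₂ + v) :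
    ∃ S : AddSubmonoid Q, S.FG ∧ (∀ p : P, ∃ s ∈ S, h s = p) ∧
      (∀ s₁ ∈ S, ∀ s₂ ∈ S, ∀ u : P, IsAddUnit u → h s₁ = h s₂ + u →
        ∃ v ∈ S, (∃ w ∈ S, v + w = 0) ∧ s₁ = s₂ + v) := by
  obtain ⟨T, hT⟩ := hPfg.fg_top
  let q (p : T) : Q := Function.surjInv hsurj p
  have hq : (closure (Set.range q)).map h = ⊤ := by
    rw [AddMonoidHom.map_mclosure, ← Set.range_comp]
    simpa [q, Function.comp_def, Function.surjInv_eq hsurj] using hT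
  let K := (ofAddUnits (⊤ : AddSubgroup (AddUnits P))).comap h (map_add h)
  have hK : K ≤ ofAddUnits ⊤ := fun q₁ q₂ hK₁₂ => by
    obtain ⟨u, hu, hu₁₂⟩ := ofAddUnits_top_iff.1 hK₁₂
    exact ofAddUnits_top_iff.2 (hstrict q₁ q₂ u hu hu₁₂)
  obtain ⟨G, hG_fg, hG⟩ := exists_fg_ofAddUnits_of_mem_closure q K hK
  let U := G.toAddSubmonoid.map (AddUnits.coeHom Q)
  refine ⟨closure (Set.range q) ⊔ U, ?_, fun p => ?_, fun s₁ hs₁ s₂ hs₂ u hu hu₁₂ => ?_⟩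
  · exact (fg_iff _).2 ⟨_, rfl, Set.finite_range q⟩ |>.sup
      (((AddSubgroup.fg_iff_addSubmonoid_fg G).1 hG_fg).map _)
  · obtain ⟨s, hs, rfl⟩ := hq.ge (mem_top p)
    exact ⟨s, mem_sup_left hs, rfl⟩
  · obtain ⟨g, hg, rfl⟩ := ofAddUnits_of_mem_sup (ofAddUnits_le_comap h G) hG hs₁ hs₂
      (ofAddUnits_top_iff.2 ⟨u, hu, hu₁₂⟩)
    exact ⟨g, mem_sup_right ⟨g, hg, rfl⟩, ⟨↑(-g), mem_sup_right ⟨-g, G.neg_mem hg, rfl⟩,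
      g.add_neg⟩, rfl⟩
end

section
/- Quotients of saturated monoids are saturated: Let G be an abelian group and P ⊆ G a submonoid generating G as a group which is saturated in G (for all g ∈ G and integers n > 0, n • g ∈ P implies g ∈ P). Let Q ⊆ P be a submonoid and H ⊆ G the subgroup generated by Q. Then the image of P under the quotient map G → G ⧸ H is saturated in G ⧸ H: for every x ∈ G ⧸ H and every integer n > 0, if n • x lies in the image of P then x lies in the image of P. -/
/-!
Write `H` for the subgroup generated by `Q`. Since `Q` is a monoid, every element of `H` is a
difference `a - b` of elements of `Q`, so the class of `g` lies in the image of `P` exactly when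
`g + b ∈ P` for some `b ∈ Q`. If `n • g + b ∈ P`, then `n • (g + b) = (n • g + b) + (n - 1) • b`
lies in `P` because `Q ⊆ P`, and saturation of `P` gives `g + b ∈ P`.
-/

namespace AddSubmonoid

variable {G : Type*} [AddCommGroup G]

def IsSaturated (P : AddSubmonoid G) : Prop :=
  ∀ (g : G) (n : ℕ), 0 < n → n • g ∈ P → g ∈ P

theorem exists_sub_eq_of_mem_addSubgroupClosure (Q : AddSubmonoid G) {h : G}
    (hh : h ∈ AddSubgroup.closure (Q : Set G)) : ∃ a ∈ Q, ∃ b ∈ Q, a - b = h := by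
  induction hh using AddSubgroup.closure_induction with
  | mem x hx => exact ⟨x, hx, 0, Q.zero_mem, sub_zero x⟩
  | zero => exact ⟨0, Q.zero_mem, 0, Q.zero_mem, sub_zero 0⟩
  | add x y _ _ ihx ihy =>
    obtain ⟨a, ha, b, hb, rfl⟩ := ihx
    obtain ⟨c, hc, d, hd, rfl⟩ := ihy
    exact ⟨a + c, Q.add_mem ha hc, b + d, Q.add_mem hb hd, by abel⟩
  | neg x _ ihx =>
    obtain ⟨a, ha, b, hb, rfl⟩ := ihx
    exact ⟨b, hb, a, ha, (neg_sub a b).symm⟩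

theorem mk_mem_map_mk'_closure_iff {P Q : AddSubmonoid G} (hQP : Q ≤ P) (g : G) :
    (g : G ⧸ AddSubgroup.closure (Q : Set G)) ∈
        P.map (QuotientAddGroup.mk' (AddSubgroup.closure (Q : Set G))) ↔
      ∃ b ∈ Q, g + b ∈ P := by
  constructor
  · rintro ⟨p, hp, hpg⟩
    have hsub : g - p ∈ AddSubgroup.closure (Q : Set G) :=
      QuotientAddGroup.eq_iff_sub_mem.mp hpg.symm
    obtain ⟨a, ha, b, hb, hab⟩ := Q.exists_sub_eq_of_mem_addSubgroupClosure hsub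
    have hgb : g + b = p + a := by linear_combination (norm := abel) hab.symm
    exact ⟨b, hb, hgb ▸ P.add_mem hp (hQP ha)⟩
  · rintro ⟨b, hb, hgb⟩
    refine ⟨g + b, hgb, QuotientAddGroup.eq_iff_sub_mem.mpr ?_⟩
    simpa using AddSubgroup.subset_closure hb

theorem IsSaturated.map_mk'_closure {P Q : AddSubmonoid G} (hQP : Q ≤ P) (hP : P.IsSaturated) :
    (P.map (QuotientAddGroup.mk' (AddSubgroup.closure (Q : Set G)))).IsSaturated := by
  intro x n hn hx
  induction x using QuotientAddGroup.induction_on with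
  | H g =>
    obtain ⟨b, hb, hngb⟩ := (mk_mem_map_mk'_closure_iff hQP (n • g)).mp hx
    have hsplit : n • (g + b) = (n • g + b) + (n - 1) • b := by
      obtain ⟨m, rfl⟩ := Nat.exists_eq_add_of_lt hn
      simp only [add_smul, smul_add, one_smul, Nat.add_sub_cancel]
      abel
    have hmul : n • (g + b) ∈ P := hsplit ▸ P.add_mem hngb (P.nsmul_mem (hQP hb) _)
    exact (mk_mem_map_mk'_closure_iff hQP g).mpr ⟨b, hb, hP _ n hn hmul⟩

end AddSubmonoid

theorem saturated_quotient_general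
    (G : Type*) [AddCommGroup G] (P Q : AddSubmonoid G) (hQP : Q ≤ P)
    (hsat : ∀ (g : G) (n : ℕ), 0 < n → n • g ∈ P → g ∈ P) :
    ∀ (x : G ⧸ AddSubgroup.closure (Q : Set G)) (n : ℕ), 0 < n →
      n • x ∈ P.map (QuotientAddGroup.mk' (AddSubgroup.closure (Q : Set G))) →
      x ∈ P.map (QuotientAddGroup.mk' (AddSubgroup.closure (Q : Set G))) :=
  AddSubmonoid.IsSaturated.map_mk'_closure hQP hsat

/-- **Quotients of saturated monoids are saturated.** Let `G` be an abelian group and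
`P ⊆ G` a submonoid generating `G` as a group which is saturated in `G`.  Let `Q ⊆ P` be
a submonoid and `H ⊆ G` the subgroup generated by `Q`.  Then the image of `P` in `G ⧸ H`
is saturated in `G ⧸ H`. -/
theorem saturated_quotient
    (G : Type*) [AddCommGroup G] (P Q : AddSubmonoid G) (hQP : Q ≤ P)
    (hgen : AddSubgroup.closure (P : Set G) = ⊤)
    (hsat : ∀ (g : G) (n : ℕ), 0 < n → n • g ∈ P → g ∈ P) :
    ∀ (x : G ⧸ AddSubgroup.closure (Q : Set G)) (n : ℕ), 0 < n →
      n • x ∈ P.map (QuotientAddGroup.mk' (AddSubgroup.closure (Q : Set G))) →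
      x ∈ P.map (QuotientAddGroup.mk' (AddSubgroup.closure (Q : Set G))) :=
  saturated_quotient_general G P Q hQP hsat
end

section
/- Smooth functions vanishing on coordinate hyperplanes: Let n, k be natural numbers with k ≤ n, and let f : (Fin n → ℝ) → ℝ be infinitely differentiable (ContDiff ℝ ⊤). Suppose f(x) = 0 whenever x_i = 0 for some index i with i < k (i.e., f vanishes on the union of the first k coordinate hyperplanes). Then there exists an infinitely differentiable function v : (Fin n → ℝ) → ℝ such that f(x) = (∏_{i < k} x_i) · v(x) for all x ∈ ℝⁿ. -/
/-!
Hadamard's lemma: if a smooth `f` vanishes on the hyperplane `x_j = 0`, then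
`f x = x_j • ∫₀¹ ∂_j f(x₁, …, t x_j, …, xₙ) dt`, and the integral is smooth in `x`. The quotient
still vanishes on the other hyperplanes `x_i = 0`, by continuity in `x_j` away from `x_j = 0`,
so the coordinates can be divided out one at a time.
-/

open MeasureTheory Set Metric Function
open scoped Convolution ContDiff

theorem contDiff_setIntegral_of_isBounded {P G E : Type*} [NormedAddCommGroup P]
    [NormedSpace ℝ P] [NormedAddCommGroup G] [NormedSpace ℝ G] [FiniteDimensional ℝ G]
    [MeasurableSpace G] [BorelSpace G] [NormedAddCommGroup E] [NormedSpace ℝ E]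
    {μ : Measure G} [IsFiniteMeasureOnCompacts μ] {n : ℕ∞} {s : Set G}
    (hs : MeasurableSet s) (hs_bdd : Bornology.IsBounded s) {F : P → G → E}
    (hF : ContDiff ℝ n (uncurry F)) :
    ContDiff ℝ n (fun p => ∫ t in s, F p t ∂μ) := by
  obtain ⟨r, hr, hsr⟩ := hs_bdd.subset_closedBall_lt 0 (0 : G)
  -- a cutoff equal to `1` on `s` makes the integrand compactly supported in `t`
  let χ : ContDiffBump (0 : G) := ⟨r, r + 1, hr, lt_add_one r⟩
  let g : P → G → E := fun p u => χ u • F p (-u)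
  have hg : ContDiff ℝ n (uncurry g) :=
    (χ.contDiff.comp contDiff_snd).smul (hF.comp (contDiff_fst.prodMk contDiff_snd.neg))
  have hg_supp : ∀ p u, u ∉ closedBall (0 : G) (r + 1) → g p u = 0 := fun p u hu => by
    simp [g, χ.zero_of_le_dist (not_le.1 (mem_closedBall.not.1 hu)).le]
  have h1 : LocallyIntegrable (s.indicator fun _ => (1 : ℝ)) μ :=
    ((integrableOn_const hs_bdd.measure_lt_top.ne).integrable_indicator hs).locallyIntegrable
  have key := contDiffOn_convolution_right_with_param_comp (ContinuousLinearMap.lsmul ℝ ℝ)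
    (v := fun _ : P => (0 : G)) contDiffOn_const isOpen_univ (isCompact_closedBall 0 (r + 1))
    (fun p u _ hu => hg_supp p u hu) h1 hg.contDiffOn
  rw [contDiffOn_univ] at key
  convert key using 2 with p
  rw [convolution, ← integral_indicator hs]
  congr 1 with t
  by_cases ht : t ∈ s
  · have : χ t = 1 := χ.one_of_mem_closedBall (hsr ht)
    simp [ht, g, χ.neg, this]
  · simp [ht]

theorem ContDiff.exists_eq_smul_of_vanishes_on_ker {E F : Type*} [NormedAddCommGroup E]
    [NormedSpace ℝ E] [NormedAddCommGroup F] [NormedSpace ℝ F] [CompleteSpace F]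
    (ℓ : E →L[ℝ] ℝ) {e : E} (he : ℓ e = 1) {f : E → F} (hf : ContDiff ℝ ∞ f)
    (h : ∀ x, ℓ x = 0 → f x = 0) :
    ∃ g : E → F, ContDiff ℝ ∞ g ∧ ∀ x, f x = ℓ x • g x := by
  -- `γ x` moves along `e` from `ker ℓ` (at `t = 0`) to `x` (at `t = 1`)
  let γ : E → ℝ → E := fun x t => x - ((1 - t) * ℓ x) • e
  have hγ : ∀ x t, HasDerivAt (γ x) (ℓ x • e) t := fun x t => by
    simpa using ((((hasDerivAt_id t).const_sub 1).mul_const (ℓ x)).smul_const e).const_sub x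
  refine ⟨fun x => ∫ t in (0 : ℝ)..1, fderiv ℝ f (γ x t) e, ?_, fun x => ?_⟩
  · simp_rw [intervalIntegral.integral_of_le zero_le_one]
    refine contDiff_setIntegral_of_isBounded measurableSet_Ioc (isBounded_Ioc 0 1) ?_
    exact (hf.fderiv_right le_rfl).clm_apply contDiff_const |>.comp (by fun_prop)
  · have hderiv : ∀ t, HasDerivAt (fun t => f (γ x t)) (ℓ x • fderiv ℝ f (γ x t) e) t :=
      fun t => by
        simpa [comp_def] using
          ((hf.differentiable (by simp)).differentiableAt.hasFDerivAt).comp_hasDerivAt t (hγ x t)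
    have hcont : Continuous fun t => fderiv ℝ f (γ x t) e :=
      ((hf.continuous_fderiv (by simp)).clm_apply continuous_const).comp (by fun_prop)
    rw [← intervalIntegral.integral_smul, intervalIntegral.integral_eq_sub_of_hasDerivAt
      (fun t _ => hderiv t) ((continuous_const.smul hcont).intervalIntegrable 0 1)]
    have h0 : f (γ x 0) = 0 := h _ (by simp [γ, he])
    rw [h0, sub_zero]
    simp [γ]

theorem Continuous.eq_zero_of_update_eq_zero {ι X : Type*} [DecidableEq ι] [TopologicalSpace X]
    [T2Space X] [Zero X] {g : (ι → ℝ) → X} (hg : Continuous g) {x : ι → ℝ} (j : ι)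
    (h : ∀ t ≠ 0, g (Function.update x j t) = 0) : g x = 0 := by
  have : (fun t => g (Function.update x j t)) = fun _ => 0 :=
    Continuous.ext_on (dense_compl_singleton 0) (by fun_prop) continuous_const h
  simpa using congrFun this (x j)

theorem ContDiff.exists_eq_prod_smul_of_vanishes {ι F : Type*} [Fintype ι] [NormedAddCommGroup F]
    [NormedSpace ℝ F] [CompleteSpace F] (s : Finset ι) {f : (ι → ℝ) → F}
    (hf : ContDiff ℝ ∞ f) (h : ∀ x, ∀ i ∈ s, x i = 0 → f x = 0) :
    ∃ v : (ι → ℝ) → F, ContDiff ℝ ∞ v ∧ ∀ x, f x = (∏ i ∈ s, x i) • v x := by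
  classical
  induction s using Finset.induction_on generalizing f with
  | empty => exact ⟨f, hf, by simp⟩
  | insert j s hj ih =>
    obtain ⟨g, hg, hfg⟩ := hf.exists_eq_smul_of_vanishes_on_ker (ContinuousLinearMap.proj j)
      (e := Pi.single j 1) (by simp) fun x hx => h x j (by simp) hx
    have hg_vanish : ∀ x, ∀ i ∈ s, x i = 0 → g x = 0 := fun x i hi hxi =>
      hg.continuous.eq_zero_of_update_eq_zero j fun t ht => by
        have hij : i ≠ j := ne_of_mem_of_not_mem hi hj
        have := hfg (update x j t)
        rw [h _ i (by simp [hi]) (by simp [hij, hxi])] at this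
        simpa [ht] using this.symm
    obtain ⟨v, hv, hgv⟩ := ih hg hg_vanish
    exact ⟨v, hv, fun x => by rw [hfg, hgv, Finset.prod_insert hj, mul_smul]; rfl⟩

theorem smooth_vanishing_on_coordinate_hyperplanes_general
    (n k : ℕ)
    (f : (Fin n → ℝ) → ℝ) (hf : ContDiff ℝ (⊤ : ℕ∞) f)
    (hvanish : ∀ x : Fin n → ℝ, (∃ i : Fin n, (i : ℕ) < k ∧ x i = 0) → f x = 0) :
    ∃ v : (Fin n → ℝ) → ℝ, ContDiff ℝ (⊤ : ℕ∞) v ∧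
      ∀ x : Fin n → ℝ,
        f x = (∏ i ∈ Finset.univ.filter (fun i : Fin n => (i : ℕ) < k), x i) * v x :=
  hf.exists_eq_prod_smul_of_vanishes _ fun x i hi hxi =>
    hvanish x ⟨i, (Finset.mem_filter.1 hi).2, hxi⟩

/-- **Smooth functions vanishing on coordinate hyperplanes.** Let `k ≤ n` and let
`f : ℝⁿ → ℝ` be infinitely differentiable, vanishing on the union of the first `k`
coordinate hyperplanes.  Then `f = (x₁ ⋯ x_k) · v` for some infinitely differentiable
`v : ℝⁿ → ℝ`. -/
theorem smooth_vanishing_on_coordinate_hyperplanes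
    (n k : ℕ) (hk : k ≤ n)
    (f : (Fin n → ℝ) → ℝ) (hf : ContDiff ℝ (⊤ : ℕ∞) f)
    (hvanish : ∀ x : Fin n → ℝ, (∃ i : Fin n, (i : ℕ) < k ∧ x i = 0) → f x = 0) :
    ∃ v : (Fin n → ℝ) → ℝ, ContDiff ℝ (⊤ : ℕ∞) v ∧
      ∀ x : Fin n → ℝ,
        f x = (∏ i ∈ Finset.univ.filter (fun i : Fin n => (i : ℕ) < k), x i) * v x :=
  smooth_vanishing_on_coordinate_hyperplanes_general n k f hf hvanish
end

section
/- Powers of monomial ideals in monoid algebras: Let P be a commutative monoid (written additively) and I ⊆ P an ideal of P (a subset with I + P ⊆ I). Let J be the ideal of ℤ[P] = AddMonoidAlgebra ℤ P generated by the basis elements [i] = single i 1 for i ∈ I. Then for every integer n ≥ 1, the n-th power Jⁿ equals the set of elements of ℤ[P] whose support is contained in Iⁿ := {i₁ + ⋯ + iₙ : i₁, …, iₙ ∈ I}; equivalently, Jⁿ is the ℤ-span of the basis elements [p] for p ∈ Iⁿ. -/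
/-!
Since `[a] * [b] = [a + b]`, the `n`-th power of the ideal spanned by the monomials over `I` is
the ideal spanned by the monomials over `n • I`. For a subset `s` of `P` absorbing under
translation, such as `n • I` for `n ≥ 1`, the ideal spanned by the monomials over `s` consists
exactly of the elements supported in `s`.
-/

open Pointwise

namespace Set

variable {A : Type*} [AddCommMonoid A] {s : Set A}

theorem nsmul_eq_setOf_fin_sum (n : ℕ) :
    n • s = {a | ∃ g : Fin n → A, (∀ j, g j ∈ s) ∧ a = ∑ j, g j} := by
  ext a
  have : n • s = ∑ _j : Fin n, s := by simp
  simp only [this, mem_fintype_sum, mem_ofPred_eq, exists_prop, eq_comm]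

theorem add_mem_nsmul_of_forall_add_mem (hs : ∀ a ∈ s, ∀ b, a + b ∈ s) {n : ℕ} (hn : n ≠ 0) :
    ∀ a ∈ n • s, ∀ b, a + b ∈ n • s := by
  intro a ha b
  obtain ⟨m, rfl⟩ := Nat.exists_eq_succ_of_ne_zero hn
  rw [succ_nsmul] at ha ⊢
  obtain ⟨x, hx, y, hy, rfl⟩ := ha
  rw [add_assoc]
  exact add_mem_add hx (hs y hy b)

end Set

namespace AddMonoidAlgebra

theorem image_of'_add {k A : Type*} [Semiring k] [Add A] (s t : Set A) :
    of' k A '' (s + t) = of' k A '' s * of' k A '' t :=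
  Set.image_image2_distrib fun a b => by simp [single_mul_single]

variable {k A : Type*} [CommSemiring k] [AddCommMonoid A]

theorem ideal_span_image_of'_pow (s : Set A) (n : ℕ) :
    Ideal.span (of' k A '' s) ^ n = Ideal.span (of' k A '' (n • s)) := by
  induction n with
  | zero => simp [← one_def]
  | succ n ih => rw [pow_succ, ih, Ideal.span_mul_span', ← image_of'_add, succ_nsmul]

theorem mem_ideal_span_of'_image_iff {s : Set A} (hs : ∀ a ∈ s, ∀ b, a + b ∈ s)
    {x : AddMonoidAlgebra k A} :
    x ∈ Ideal.span (of' k A '' s) ↔ ↑x.coeff.support ⊆ s := by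
  rw [mem_ideal_span_of'_image]
  refine ⟨fun hx m hm => ?_, fun hx m hm => ⟨m, hx hm, 0, (zero_add m).symm⟩⟩
  obtain ⟨m', hm', d, rfl⟩ := hx m hm
  exact add_comm m' d ▸ hs m' hm' d

end AddMonoidAlgebra

/-- **Powers of monomial ideals in monoid algebras.** Let `P` be a commutative monoid and
`I ⊆ P` a monoid ideal (`I + P ⊆ I`).  Let `J` be the ideal of `ℤ[P]` generated by the
basis elements `[i]` for `i ∈ I`.  Then for every `n ≥ 1`, the power `Jⁿ` consists
exactly of the elements of `ℤ[P]` whose support is contained in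
`Iⁿ = {i₁ + ⋯ + iₙ : i₁, …, iₙ ∈ I}`. -/
theorem monomial_ideal_powers
    (P : Type*) [AddCommMonoid P] (I : Set P)
    (hI : ∀ i ∈ I, ∀ p : P, i + p ∈ I)
    (J : Ideal (AddMonoidAlgebra ℤ P))
    (hJ : J = Ideal.span {f : AddMonoidAlgebra ℤ P | ∃ i ∈ I, f = AddMonoidAlgebra.single i 1}) :
    ∀ n : ℕ, 1 ≤ n → ∀ f : AddMonoidAlgebra ℤ P,
      f ∈ J ^ n ↔
        ↑f.coeff.support ⊆ {p : P | ∃ g : Fin n → P, (∀ j, g j ∈ I) ∧ p = ∑ j, g j} := by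
  intro n hn f
  have hJ' : J = Ideal.span (AddMonoidAlgebra.of' ℤ P '' I) := by
    rw [hJ]
    congr 1
    ext f
    simp [eq_comm]
  have hnI := Set.add_mem_nsmul_of_forall_add_mem hI (Nat.one_le_iff_ne_zero.mp hn)
  rw [hJ', AddMonoidAlgebra.ideal_span_image_of'_pow I n,
    AddMonoidAlgebra.mem_ideal_span_of'_image_iff hnI,
    Set.nsmul_eq_setOf_fin_sum]
end
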